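/- arXiv:2507.10909 — 3 statements merged into one kernel-verified Lean document; each statement's English description precedes it below -/
import Mathlib

section
/- Let G be an infinite, locally compact, totally disconnected strongly topologically orderable gyrogroup. Then either G is discrete, or G contains a clopen L-subgyrogroup H which, as a topological space, is homeomorphic to the Cantor set. -/
open Set Topology

universe u

class Gyrogroup (G : Type u) where
  op : G → G → G
  one : G
  inv : G → G
  gyr : G → G → G ≃ G
  one_op : ∀ g, op one g = g
  op_one : ∀ g, op g one = g
  inv_op : ∀ g, op (inv g) g = one
  op_inv : ∀ g, op g (inv g) = one
  unique_one : ∀ e : G, (∀ g, op e g = g ∧ op g e = g) → e = one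
  unique_inv : ∀ g h : G, (op h g = one ∧ op g h = one) → h = inv g
  gyr_op : ∀ g h f, op g (op h f) = op (op g h) (gyr g h f)
  gyr_hom : ∀ g h a b, gyr g h (op a b) = op (gyr g h a) (gyr g h b)
  loop : ∀ g h, gyr g h = gyr (op g h) h

namespace Gyrogroup

variable {G : Type u} [Gyrogroup G]

/-- `H` is a subgyrogroup: nonempty and a gyrogroup under the restricted operations. -/
def IsSubgyrogroup (H : Set G) : Prop :=
  H.Nonempty ∧ one ∈ H ∧
  (∀ a ∈ H, ∀ b ∈ H, op a b ∈ H) ∧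
  (∀ a ∈ H, inv a ∈ H) ∧
  (∀ a ∈ H, ∀ b ∈ H, Set.BijOn (gyr a b) H H)

/-- `H` is an L-subgyrogroup: `gyr g h` fixes `H` setwise for every `g ∈ G`, `h ∈ H`. -/
def IsLSubgyrogroup (H : Set G) : Prop :=
  IsSubgyrogroup H ∧ ∀ g : G, ∀ h ∈ H, (gyr g h) '' H = H

def leftCoset (a : G) (H : Set G) : Set G := (fun h => op a h) '' H

/-- The subgyrogroup generated by `S`. -/
def generatedSubgyrogroup (S : Set G) : Set G :=
  ⋂₀ {H : Set G | IsSubgyrogroup H ∧ S ⊆ H}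

/-- The gyrogroup operations are continuous (topological gyrogroup). -/
def ContinuousGyroOps (G : Type u) [Gyrogroup G] [TopologicalSpace G] : Prop :=
  Continuous (fun p : G × G => op p.1 p.2) ∧ Continuous (inv : G → G)

/-- The topology coincides with the order topology of some linear order. -/
def TopologicallyOrderable (G : Type u) [t : TopologicalSpace G] : Prop :=
  ∃ l : LinearOrder G, t = TopologicalSpace.generateFrom
      {s : Set G | ∃ a : G, s = {x | l.lt a x} ∨ s = {x | l.lt x a}}

/-- A strongly topological gyrogroup: a topological gyrogroup with a neighborhood base
at `1` whose members are invariant under all gyroautomorphisms. -/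
def StronglyTopologicalGyrogroup (G : Type u) [Gyrogroup G] [TopologicalSpace G] : Prop :=
  ContinuousGyroOps G ∧
  ∃ 𝒰 : Set (Set G), (∀ U ∈ 𝒰, U ∈ nhds (one : G)) ∧
    (∀ V ∈ nhds (one : G), ∃ U ∈ 𝒰, U ⊆ V) ∧
    (∀ U ∈ 𝒰, ∀ x y : G, (gyr x y) '' U = U)

def StronglyTopologicallyOrderable (G : Type u) [Gyrogroup G] [TopologicalSpace G] : Prop :=
  StronglyTopologicalGyrogroup G ∧ TopologicallyOrderable G

end Gyrogroup

open Gyrogroup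

namespace Gyrogroup

variable {G : Type u} [Gyrogroup G]

lemma op_left_inj (a : G) : Function.Injective (op a : G → G) := by
  intro x y hxy
  have key : ∀ z : G, op (inv a) (op a z) = gyr (inv a) a z := fun z => by
    rw [gyr_op, inv_op, one_op]
  have h := congrArg (op (inv a)) hxy
  rw [key, key] at h
  exact (gyr (inv a) a).injective h

lemma gyr_one_left (a f : G) : gyr one a f = f := by
  apply op_left_inj a
  have h := gyr_op (one : G) a f
  rw [one_op, one_op] at h
  exact h.symm

lemma gyr_inv_left (a f : G) : gyr (inv a) a f = f := by
  have h := loop (inv a) a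
  rw [inv_op] at h
  rw [h, gyr_one_left]

lemma gyr_self_inv (a f : G) : gyr a (inv a) f = f := by
  have h := loop a (inv a)
  rw [op_inv] at h
  rw [h, gyr_one_left]

lemma left_cancel (a x : G) : op (inv a) (op a x) = x := by
  rw [gyr_op, inv_op, one_op, gyr_inv_left]

lemma left_cancel' (a x : G) : op a (op (inv a) x) = x := by
  rw [gyr_op, op_inv, one_op, gyr_self_inv]

lemma eq_inv_of_op_eq_one {a x : G} (h : op a x = one) : x = inv a := by
  have h2 := congrArg (op (inv a)) h
  rw [left_cancel, op_one] at h2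
  exact h2

lemma inv_inv (a : G) : inv (inv a) = a := (eq_inv_of_op_eq_one (inv_op a)).symm

lemma inv_one : inv (one : G) = one := (eq_inv_of_op_eq_one (one_op one)).symm

lemma gyr_one_arg (x y : G) : gyr x y (one : G) = one := by
  have h := gyr_hom x y (one : G) one
  rw [one_op] at h
  have h2 : op (gyr x y (one : G)) one = op (gyr x y (one : G)) (gyr x y (one : G)) := by
    rw [op_one]; exact h
  exact (op_left_inj _ h2).symm

lemma gyr_inv (x y a : G) : gyr x y (inv a) = inv (gyr x y a) := by
  apply eq_inv_of_op_eq_one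
  rw [← gyr_hom, op_inv, gyr_one_arg]

lemma gyr_symm_inv (x y a : G) : (gyr x y).symm (inv a) = inv ((gyr x y).symm a) := by
  apply (gyr x y).injective
  rw [Equiv.apply_symm_apply, gyr_inv, Equiv.apply_symm_apply]

lemma inv_op_eq (a b : G) : inv (op a b) = gyr a b (op (inv b) (inv a)) := by
  symm
  apply eq_inv_of_op_eq_one
  rw [← gyr_op, left_cancel', op_inv]

lemma op_gyr_cancel (g w : G) : op (op g w) (gyr g w (inv w)) = g := by
  rw [← gyr_op, op_inv, op_one]

/-- Left translation as an equivalence. -/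
def leftMul (a : G) : G ≃ G where
  toFun := op a
  invFun := op (inv a)
  left_inv := left_cancel a
  right_inv := left_cancel' a

end Gyrogroup
namespace Gyrogroup

variable {G : Type u} [Gyrogroup G] [TopologicalSpace G]

lemma continuous_op_left (hc : ContinuousGyroOps G) (a : G) :
    Continuous (op a : G → G) := by
  have : (op a : G → G) = (fun p : G × G => op p.1 p.2) ∘ (fun x => (a, x)) := rfl
  rw [this]
  exact hc.1.comp (continuous_const.prodMk continuous_id)

/-- Left translation as a homeomorphism. -/
noncomputable def leftMulHomeo (hc : ContinuousGyroOps G) (a : G) : G ≃ₜ G where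
  toEquiv := leftMul a
  continuous_toFun := continuous_op_left hc a
  continuous_invFun := continuous_op_left hc (inv a)

@[simp] lemma leftMulHomeo_apply (hc : ContinuousGyroOps G) (a x : G) :
    leftMulHomeo hc a x = op a x := rfl

/-- A homeomorphism of `G` mapping `x` to `y`. -/
noncomputable def transHomeo (hc : ContinuousGyroOps G) (x y : G) : G ≃ₜ G :=
  (leftMulHomeo hc x).symm.trans (leftMulHomeo hc y)

lemma transHomeo_apply (hc : ContinuousGyroOps G) (x y : G) :
    transHomeo hc x y x = y := by
  show (leftMulHomeo hc y) ((leftMulHomeo hc x).symm x) = y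
  have h : (leftMulHomeo hc x).symm x = one := by
    show op (inv x) x = one
    exact inv_op x
  rw [h]
  show op y one = y
  exact op_one y

omit [Gyrogroup G] in
lemma homeo_image_mem_nhds {e : G ≃ₜ G} {t : Set G} {x : G} (ht : t ∈ nhds x) :
    e '' t ∈ nhds (e x) := by
  rw [show e '' t = e.symm ⁻¹' t from e.toEquiv.image_eq_preimage_symm t]
  exact e.symm.continuous.continuousAt.preimage_mem_nhds (by
    rw [Homeomorph.symm_apply_apply]; exact ht)

lemma coset_mem_nhds (hc : ContinuousGyroOps G) {V : Set G} (hV : V ∈ nhds (one : G))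
    (w : G) : (fun h => op w h) '' V ∈ nhds w := by
  have := homeo_image_mem_nhds (e := leftMulHomeo hc w) hV
  simpa [op_one, show ⇑(leftMulHomeo hc w) = fun h => op w h from rfl] using this

lemma isClopen_coset (hc : ContinuousGyroOps G) {H : Set G} (hH : IsClopen H) (w : G) :
    IsClopen ((fun h => op w h) '' H) := by
  have : (fun h => op w h) '' H = (leftMulHomeo hc w).symm ⁻¹' H :=
    (leftMulHomeo hc w).toEquiv.image_eq_preimage_symm H
  rw [this]
  exact hH.preimage (leftMulHomeo hc w).symm.continuous

/-- If some point is isolated, the topology is discrete. -/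
lemma discrete_of_isolated (hc : ContinuousGyroOps G) {x : G} (hx : {x} ∈ nhds x) :
    DiscreteTopology G := by
  have h : ∀ y : G, {y} ∈ nhds y := by
    intro y
    have := homeo_image_mem_nhds (e := transHomeo hc x y) hx
    rw [Set.image_singleton, transHomeo_apply] at this
    exact this
  rw [discreteTopology_iff_nhds]
  intro y
  exact le_antisymm (Filter.le_pure_iff.2 (h y)) (pure_le_nhds y)

/-- In a nondiscrete setting, every nonempty open set has two points. -/
lemma exists_ne_of_mem_open (hc : ContinuousGyroOps G) (hnd : ¬ DiscreteTopology G)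
    {P : Set G} (hP : IsOpen P) {p : G} (hp : p ∈ P) : ∃ q ∈ P, q ≠ p := by
  by_contra hcon
  push_neg at hcon
  have : P ⊆ {p} := fun z hz => by
    rcases eq_or_ne z p with rfl | hne
    · rfl
    · exact absurd (hcon z hz) (by simpa using hne)
  exact hnd (discrete_of_isolated hc (Filter.mem_of_superset (hP.mem_nhds hp) this))

end Gyrogroup
section CantorSplit

variable {X : Type u} [TopologicalSpace X] [T2Space X]

theorem cantor_of_splitting {W : Set X} (hWc : IsCompact W) (hWne : W.Nonempty)
    (hWclopen : IsClopen W)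
    (k : ℕ → ℕ) (R : ℕ → X → X → Prop)
    (hsep : ∀ x ∈ W, ∀ y ∈ W, x ≠ y → ∃ n, ¬ R n x y)
    (hsplit : ∀ (n : ℕ) (P : Set X), P.Nonempty → IsClopen P → P ⊆ W →
      ∃ D : Fin (k n) → Set X,
        (∀ a, (D a).Nonempty) ∧ (∀ a, IsClopen (D a)) ∧ (∀ a, D a ⊆ P) ∧
        (∀ a b, a ≠ b → Disjoint (D a) (D b)) ∧ ((⋃ a, D a) = P) ∧
        (∀ a, ∀ x ∈ D a, ∀ y ∈ D a, R n x y)) :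
    Nonempty (W ≃ₜ ((n : ℕ) → Fin (k n))) := by
  classical
  choose Df h1 h2 h3 h4 h5 h6 using hsplit
  let Good : Type _ := {P : Set X // P.Nonempty ∧ IsClopen P ∧ P ⊆ W}
  let step : ∀ (n : ℕ), Good → Fin (k n) → Good := fun n p a =>
    ⟨Df n p.1 p.2.1 p.2.2.1 p.2.2.2 a,
      h1 n p.1 p.2.1 p.2.2.1 p.2.2.2 a,
      h2 n p.1 p.2.1 p.2.2.1 p.2.2.2 a,
      (h3 n p.1 p.2.1 p.2.2.1 p.2.2.2 a).trans p.2.2.2⟩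
  let T : ∀ n : ℕ, ((i : Fin n) → Fin (k i)) → Good :=
    fun n => Nat.rec (motive := fun m => ((i : Fin m) → Fin (k i)) → Good)
      (fun _ => ⟨W, hWne, hWclopen, subset_rfl⟩)
      (fun m ih s => step m (ih (Fin.init s)) (s (Fin.last m))) n
  have Tzero : ∀ s, (T 0 s).1 = W := fun _ => rfl
  have Tsucc : ∀ (m : ℕ) (s : (i : Fin (m+1)) → Fin (k i)),
      T (m+1) s = step m (T m (Fin.init s)) (s (Fin.last m)) := fun _ _ => rfl
  have Tsub : ∀ (m : ℕ) (s : (i : Fin (m+1)) → Fin (k i)),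
      (T (m+1) s).1 ⊆ (T m (Fin.init s)).1 := by
    intro m s
    rw [Tsucc]
    exact h3 m _ _ _ _ (s (Fin.last m))
  have TR : ∀ (m : ℕ) (s : (i : Fin (m+1)) → Fin (k i)), ∀ x ∈ (T (m+1) s).1,
      ∀ y ∈ (T (m+1) s).1, R m x y := by
    intro m s
    rw [Tsucc]
    exact h6 m _ _ _ _ (s (Fin.last m))
  have Tdisj : ∀ (n : ℕ) (s t : (i : Fin n) → Fin (k i)), s ≠ t →
      Disjoint (T n s).1 (T n t).1 := by
    intro n
    induction n with
    | zero => intro s t hst; exact absurd (Subsingleton.elim s t) hst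
    | succ m ih =>
      intro s t hst
      by_cases hinit : Fin.init s = Fin.init t
      · have hlast : s (Fin.last m) ≠ t (Fin.last m) := by
          intro he
          apply hst
          rw [← Fin.snoc_init_self s, ← Fin.snoc_init_self t, hinit, he]
        rw [Tsucc, Tsucc, hinit]
        exact h4 m _ _ _ _ _ _ hlast
      · exact Disjoint.mono (Tsub m s) (Tsub m t) (ih _ _ hinit)
  have Tcover : ∀ (n : ℕ) (x : X), x ∈ W → ∃ s, x ∈ (T n s).1 := by
    intro n
    induction n with
    | zero => intro x hx; exact ⟨fun i => i.elim0, hx⟩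
    | succ m ih =>
      intro x hx
      obtain ⟨s, hs⟩ := ih x hx
      have huni : x ∈ ⋃ a, Df m (T m s).1 (T m s).2.1 (T m s).2.2.1 (T m s).2.2.2 a := by
        rw [h5]; exact hs
      obtain ⟨a, ha⟩ := Set.mem_iUnion.mp huni
      refine ⟨Fin.snoc (α := fun i : Fin (m+1) => Fin (k i)) s a, ?_⟩
      rw [Tsucc, Fin.init_snoc, Fin.snoc_last]
      exact ha
  choose str hstr using Tcover
  have struniq : ∀ (n : ℕ) (x : X) (hx : x ∈ W) (s : (i : Fin n) → Fin (k i)),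
      x ∈ (T n s).1 → s = str n x hx := by
    intro n x hx s hxs
    by_contra hne
    exact Set.disjoint_left.mp (Tdisj n s _ hne) hxs (hstr n x hx)
  have compat : ∀ (n : ℕ) (x : X) (hx : x ∈ W),
      Fin.init (str (n+1) x hx) = str n x hx :=
    fun n x hx => struniq n x hx _ (Tsub n _ (hstr (n+1) x hx))
  let Φ : {x // x ∈ W} → ∀ i : ℕ, Fin (k i) := fun x i => str (i+1) x.1 x.2 (Fin.last i)
  have hfull : ∀ (n : ℕ) (x : X) (hx : x ∈ W),
      str n x hx = fun i : Fin n => Φ ⟨x, hx⟩ (i : ℕ) := by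
    intro n
    induction n with
    | zero => intro x hx; funext i; exact i.elim0
    | succ m ih =>
      intro x hx
      funext i
      refine Fin.lastCases ?_ ?_ i
      · rfl
      · intro j
        have : str (m+1) x hx (Fin.castSucc j) = Fin.init (str (m+1) x hx) j := rfl
        rw [this, compat, ih]
        rfl
  have hxmem : ∀ (n : ℕ) (x : X) (hx : x ∈ W),
      x ∈ (T n (fun i : Fin n => Φ ⟨x, hx⟩ (i : ℕ))).1 := by
    intro n x hx
    rw [← hfull]
    exact hstr n x hx
  have hinj : Function.Injective Φ := by
    intro x y hxy
    by_contra hne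
    have hne' : x.1 ≠ y.1 := fun h => hne (Subtype.ext h)
    obtain ⟨n, hn⟩ := hsep x.1 x.2 y.1 y.2 hne'
    apply hn
    have hx := hxmem (n+1) x.1 x.2
    have hy := hxmem (n+1) y.1 y.2
    rw [show (⟨x.1, x.2⟩ : {x // x ∈ W}) = x from rfl] at hx
    rw [show (⟨y.1, y.2⟩ : {x // x ∈ W}) = y from rfl, ← hxy] at hy
    exact TR n _ x.1 hx y.1 hy
  have hsurj : Function.Surjective Φ := by
    intro σ
    set Ks : ℕ → Set X := fun n => (T n (fun i : Fin n => σ (i : ℕ))).1 with hKs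
    have hKnest : ∀ n, Ks (n+1) ⊆ Ks n := by
      intro n
      have e1 : Fin.init (fun i : Fin (n+1) => σ (i : ℕ)) = fun i : Fin n => σ (i : ℕ) := by
        funext i; rfl
      have := Tsub n (fun i : Fin (n+1) => σ (i : ℕ))
      rw [e1] at this
      exact this
    have hKne : ∀ n, (Ks n).Nonempty := fun n => (T n _).2.1
    have hKcl : ∀ n, IsClosed (Ks n) := fun n => (T n _).2.2.1.isClosed
    have hKcomp : IsCompact (Ks 0) := by
      rw [show Ks 0 = W from rfl]; exact hWc
    obtain ⟨x, hx⟩ := IsCompact.nonempty_iInter_of_sequence_nonempty_isCompact_isClosed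
      Ks hKnest hKne hKcomp hKcl
    have hxW : x ∈ W := by
      have := Set.mem_iInter.mp hx 0
      exact this
    refine ⟨⟨x, hxW⟩, ?_⟩
    funext i
    have hmem : x ∈ (T (i+1) (fun j : Fin (i+1) => σ (j : ℕ))).1 := Set.mem_iInter.mp hx (i+1)
    have := struniq (i+1) x hxW _ hmem
    have h2 : Φ ⟨x, hxW⟩ i = str (i+1) x hxW (Fin.last i) := rfl
    rw [h2, ← this]
    rfl
  have hcont : Continuous Φ := by
    apply continuous_pi
    intro i
    rw [continuous_discrete_rng]
    intro b
    have hset : (fun x => Φ x i) ⁻¹' {b} =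
        ⋃ (s : (j : Fin (i+1)) → Fin (k j)) (_ : s (Fin.last i) = b),
          Subtype.val ⁻¹' (T (i+1) s).1 := by
      ext x
      simp only [Set.mem_preimage, Set.mem_singleton_iff, Set.mem_iUnion]
      constructor
      · intro hb
        refine ⟨str (i+1) x.1 x.2, hb, hstr (i+1) x.1 x.2⟩
      · rintro ⟨s, hsb, hxs⟩
        have := struniq (i+1) x.1 x.2 s hxs
        have h2 : Φ x i = str (i+1) x.1 x.2 (Fin.last i) := rfl
        rw [h2, ← this]
        exact hsb
    rw [hset]
    exact isOpen_iUnion fun s => isOpen_iUnion fun _ =>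
      ((T (i+1) s).2.2.1.isOpen).preimage continuous_subtype_val
  haveI : CompactSpace W := isCompact_iff_compactSpace.mp hWc
  exact ⟨Continuous.homeoOfEquivCompactToT2 (f := Equiv.ofBijective Φ ⟨hinj, hsurj⟩) hcont⟩

end CantorSplit
section DiscreteConvert

/-- Any equivalence of discrete spaces is a homeomorphism. -/
def homeoOfEquivDiscrete {α β : Type*} [TopologicalSpace α] [TopologicalSpace β]
    [DiscreteTopology α] [DiscreteTopology β] (e : α ≃ β) : α ≃ₜ β where
  toEquiv := e
  continuous_toFun := continuous_of_discreteTopology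
  continuous_invFun := continuous_of_discreteTopology

theorem pi_fin_two_pow_homeo (T : ℕ → ℕ) (hT : ∀ n, 1 ≤ T n) :
    Nonempty (((n : ℕ) → Fin (2 ^ T n)) ≃ₜ (ℕ → Bool)) := by
  have e1 : ∀ n, Fin (2 ^ T n) ≃ (Fin (T n) → Bool) := fun n =>
    Fintype.equivOfCardEq (by simp)
  let h1 : ((n : ℕ) → Fin (2 ^ T n)) ≃ₜ ((n : ℕ) → (Fin (T n) → Bool)) :=
    Homeomorph.piCongrRight (fun n => homeoOfEquivDiscrete (e1 n))
  let h2 : ((x : Σ n, Fin (T n)) → Bool) ≃ₜ ((n : ℕ) → (Fin (T n) → Bool)) :=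
    { toEquiv := Equiv.piCurry (fun _ _ => Bool)
      continuous_toFun := by
        apply continuous_pi; intro i
        apply continuous_pi; intro j
        exact continuous_apply (⟨i, j⟩ : Σ n, Fin (T n))
      continuous_invFun := by
        apply continuous_pi; intro x
        exact (continuous_apply x.2).comp (continuous_apply x.1) }
  haveI : Infinite (Σ n, Fin (T n)) := by
    apply Infinite.of_injective (fun n : ℕ => (⟨n, ⟨0, hT n⟩⟩ : Σ n, Fin (T n)))
    intro a b hab
    exact congrArg Sigma.fst hab
  haveI : Denumerable (Σ n, Fin (T n)) := Denumerable.ofEncodableOfInfinite _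
  let e3 : (Σ n, Fin (T n)) ≃ ℕ := Denumerable.eqv _
  exact ⟨h1.trans (h2.symm.trans (Homeomorph.piCongrLeft (Y := fun _ => Bool) e3))⟩

end DiscreteConvert
namespace Gyrogroup

variable {G : Type u} [Gyrogroup G]

/-- Iterated products of a generating neighborhood. -/
def iterOp (V : Set G) : ℕ → Set G
  | 0 => V
  | n + 1 => Set.image2 op (iterOp V n) V

theorem exists_clopen_Lsub [TopologicalSpace G] [T2Space G] [LocallyCompactSpace G]
    [TotallyDisconnectedSpace G] (hst : StronglyTopologicalGyrogroup G)
    {O : Set G} (hO : O ∈ nhds (one : G)) :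
    ∃ H : Set G, IsClopen H ∧ IsCompact H ∧ IsLSubgyrogroup H ∧ H ⊆ O := by
  obtain ⟨hc, 𝒰, hUn, hUb, hUg⟩ := hst
  obtain ⟨K', hK'n, hK'O, hK'c⟩ := LocallyCompactSpace.local_compact_nhds (one : G) O hO
  have hint : one ∈ interior K' := mem_interior_iff_mem_nhds.2 hK'n
  obtain ⟨K, hKbasis, hK1, hKsub⟩ :=
    (loc_compact_Haus_tot_disc_of_zero_dim (H := G)).mem_nhds_iff.mp
      (isOpen_interior.mem_nhds hint)
  have hKclopen : IsClopen K := hKbasis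
  have hKcomp : IsCompact K :=
    hK'c.of_isClosed_subset hKclopen.isClosed (hKsub.trans interior_subset)
  have hKopen : IsOpen K := hKclopen.isOpen
  have hKO : K ⊆ O := (hKsub.trans interior_subset).trans hK'O
  -- tube argument
  have hpt : ∀ k ∈ K, ∃ A : Set G, IsOpen A ∧ k ∈ A ∧
      ∃ B ∈ nhds (one : G), ∀ a ∈ A, ∀ b ∈ B, op a b ∈ K := by
    intro k hk
    have hcont : ContinuousAt (fun p : G × G => op p.1 p.2) (k, one) := hc.1.continuousAt
    have hKm : K ∈ nhds (op k one) := hKopen.mem_nhds (by rwa [op_one])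
    have hpre : (fun p : G × G => op p.1 p.2) ⁻¹' K ∈ nhds (k, one) := hcont hKm
    obtain ⟨A, hA, B, hB, hAB⟩ := mem_nhds_prod_iff.mp hpre
    refine ⟨interior A, isOpen_interior, mem_interior_iff_mem_nhds.2 hA, B, hB,
      fun a ha b hb => ?_⟩
    have hmem : (a, b) ∈ A ×ˢ B := ⟨interior_subset ha, hb⟩
    exact hAB hmem
  choose A hAopen hAmem B hBnhds hABK using hpt
  obtain ⟨t, hcover⟩ := hKcomp.elim_nhds_subcover' (fun k hk => A k hk)
    (fun k hk => (hAopen k hk).mem_nhds (hAmem k hk))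
  set V1 := ⋂ k ∈ t, B k.1 k.2 with hV1def
  have hV1 : V1 ∈ nhds (one : G) :=
    (Filter.biInter_finset_mem t).mpr fun k _ => hBnhds k.1 k.2
  have hKV1 : ∀ k ∈ K, ∀ v ∈ V1, op k v ∈ K := by
    intro k hk v hv
    obtain ⟨i, hi⟩ := Set.mem_iUnion.mp (hcover hk)
    obtain ⟨hit, hik⟩ := Set.mem_iUnion.mp hi
    exact hABK i.1 i.2 k hik v (Set.mem_iInter₂.mp hv i hit)
  -- gyration-invariant symmetric neighborhood
  obtain ⟨U, hU𝒰, hUsub⟩ := hUb (V1 ∩ K) (Filter.inter_mem hV1 (hKopen.mem_nhds hK1))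
  have hUnhds : U ∈ nhds (one : G) := hUn U hU𝒰
  have hU1 : one ∈ U := mem_of_mem_nhds hUnhds
  set V : Set G := U ∩ inv ⁻¹' U with hVdef
  have hVnhds : V ∈ nhds (one : G) := by
    refine Filter.inter_mem hUnhds (hc.2.continuousAt.preimage_mem_nhds ?_)
    rw [inv_one]; exact hUnhds
  have hV1mem : one ∈ V := mem_of_mem_nhds hVnhds
  have hVsym : ∀ v ∈ V, inv v ∈ V := fun v hv =>
    ⟨hv.2, by rw [Set.mem_preimage, inv_inv]; exact hv.1⟩
  have hVsubU : V ⊆ U := Set.inter_subset_left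
  have hVK : V ⊆ K := fun v hv => (hUsub (hVsubU hv)).2
  have hVV1 : V ⊆ V1 := fun v hv => (hUsub (hVsubU hv)).1
  have hUmemgyr : ∀ x y : G, ∀ u ∈ U, gyr x y u ∈ U := fun x y u hu =>
    (hUg U hU𝒰 x y) ▸ Set.mem_image_of_mem _ hu
  have hUsymmem : ∀ x y : G, ∀ u ∈ U, (gyr x y).symm u ∈ U := by
    intro x y u hu
    have : (gyr x y).symm '' U = U := by
      conv_lhs => rw [← hUg U hU𝒰 x y]
      exact Equiv.symm_image_image _ _
    exact this ▸ Set.mem_image_of_mem _ hu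
  have hVgyr : ∀ x y : G, ∀ v ∈ V, gyr x y v ∈ V := by
    intro x y v hv
    refine ⟨hUmemgyr x y v hv.1, ?_⟩
    rw [Set.mem_preimage, ← gyr_inv]
    exact hUmemgyr x y _ hv.2
  have hVgyrEq : ∀ x y : G, gyr x y '' V = V := by
    intro x y
    apply Set.Subset.antisymm
    · rintro w ⟨v, hv, rfl⟩; exact hVgyr x y v hv
    · intro v hv
      refine ⟨(gyr x y).symm v, ⟨hUsymmem x y v hv.1, ?_⟩, (gyr x y).apply_symm_apply v⟩
      rw [Set.mem_preimage, ← gyr_symm_inv]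
      exact hUsymmem x y _ hv.2
  -- the subgyrogroup W
  have hiterK : ∀ n, iterOp V n ⊆ K := by
    intro n; induction n with
    | zero => exact hVK
    | succ m ih =>
      rintro x ⟨p, hp, v, hv, rfl⟩
      exact hKV1 p (ih hp) v (hVV1 hv)
  have hone_iter : ∀ n, one ∈ iterOp V n := by
    intro n; induction n with
    | zero => exact hV1mem
    | succ m ih => exact ⟨one, ih, one, hV1mem, one_op one⟩
  have hgyr_iter : ∀ (x y : G) (n : ℕ), gyr x y '' iterOp V n = iterOp V n := by
    intro x y n; induction n with
    | zero => exact hVgyrEq x y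
    | succ m ih =>
      show gyr x y '' Set.image2 op (iterOp V m) V = Set.image2 op (iterOp V m) V
      rw [Set.image_image2_distrib (gyr_hom x y), ih, hVgyrEq]
  have hgyr_itermem : ∀ (x y : G) (n : ℕ), ∀ a ∈ iterOp V n, gyr x y a ∈ iterOp V n :=
    fun x y n a ha => (hgyr_iter x y n) ▸ Set.mem_image_of_mem _ ha
  have hop_iter : ∀ (m n : ℕ) (a b : G), a ∈ iterOp V n → b ∈ iterOp V m →
      op a b ∈ iterOp V (n + m + 1) := by
    intro m; induction m with
    | zero => intro n a b ha hb; exact ⟨a, ha, b, hb, rfl⟩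
    | succ p ih =>
      intro n a b ha hb
      obtain ⟨b', hb', v, hv, rfl⟩ := hb
      rw [gyr_op a b' v]
      exact ⟨op a b', ih n a b' ha hb', gyr a b' v, hVgyr a b' v hv, rfl⟩
  have hinv_iter : ∀ (n : ℕ) (a : G), a ∈ iterOp V n → ∃ m, inv a ∈ iterOp V m := by
    intro n; induction n with
    | zero => intro a ha; exact ⟨0, hVsym a ha⟩
    | succ p ih =>
      intro a ha
      obtain ⟨b, hb, v, hv, rfl⟩ := ha
      obtain ⟨m, hm⟩ := ih b hb
      rw [inv_op_eq b v]
      exact ⟨0 + m + 1, hgyr_itermem b v _ _ (hop_iter m 0 _ _ (hVsym v hv) hm)⟩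
  set W := ⋃ n, iterOp V n with hWdef
  have hmemW : ∀ {a : G}, a ∈ W ↔ ∃ n, a ∈ iterOp V n := fun {a} => Set.mem_iUnion
  have honeW : one ∈ W := hmemW.mpr ⟨0, hV1mem⟩
  have hopW : ∀ a ∈ W, ∀ b ∈ W, op a b ∈ W := by
    intro a ha b hb
    obtain ⟨n, hn⟩ := hmemW.mp ha
    obtain ⟨m, hm⟩ := hmemW.mp hb
    exact hmemW.mpr ⟨n + m + 1, hop_iter m n a b hn hm⟩
  have hinvW : ∀ a ∈ W, inv a ∈ W := by
    intro a ha
    obtain ⟨n, hn⟩ := hmemW.mp ha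
    obtain ⟨m, hm⟩ := hinv_iter n a hn
    exact hmemW.mpr ⟨m, hm⟩
  have hgyrW : ∀ x y : G, gyr x y '' W = W := by
    intro x y
    rw [hWdef, Set.image_iUnion]
    exact Set.iUnion_congr (hgyr_iter x y)
  have hLsub : IsLSubgyrogroup W := by
    refine ⟨⟨⟨one, honeW⟩, honeW, hopW, hinvW, ?_⟩, fun g h _ => hgyrW g h⟩
    intro a _ b _
    exact ⟨fun x hx => (hgyrW a b) ▸ Set.mem_image_of_mem _ hx,
      (gyr a b).injective.injOn, fun x hx => (hgyrW a b).symm ▸ hx⟩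
  have hWnhds : ∀ w ∈ W, W ∈ nhds w := by
    intro w hw
    obtain ⟨n, hn⟩ := hmemW.mp hw
    refine Filter.mem_of_superset (coset_mem_nhds hc hVnhds w) ?_
    rintro x ⟨v, hv, rfl⟩
    exact hmemW.mpr ⟨n + 0 + 1, hop_iter 0 n w v hn hv⟩
  have hWopen : IsOpen W := by
    rw [isOpen_iff_mem_nhds]; exact hWnhds
  have hWclosed : IsClosed W := by
    rw [← isOpen_compl_iff, isOpen_iff_mem_nhds]
    intro g hg
    refine Filter.mem_of_superset (coset_mem_nhds hc hVnhds g) ?_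
    rintro x ⟨v, hv, rfl⟩
    intro hmem
    apply hg
    have h1 : g = op (op g v) (gyr g v (inv v)) := (op_gyr_cancel g v).symm
    obtain ⟨n, hn⟩ := hmemW.mp hmem
    rw [h1]
    exact hmemW.mpr ⟨n + 0 + 1, hop_iter 0 n _ _ hn (hVgyr g v _ (hVsym v hv))⟩
  have hWK : W ⊆ K := Set.iUnion_subset hiterK
  exact ⟨W, ⟨hWclosed, hWopen⟩, hKcomp.of_isClosed_subset hWclosed hWK,
    hLsub, hWK.trans hKO⟩

end Gyrogroup
namespace Gyrogroup

variable {G : Type u} [Gyrogroup G]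

lemma mem_leftCoset_self {H : Set G} (h1 : one ∈ H) (a : G) : a ∈ leftCoset a H :=
  ⟨one, h1, op_one a⟩

lemma leftCoset_eq_of_mem {H : Set G} (hH : IsLSubgyrogroup H) {a c : G}
    (hc : c ∈ leftCoset a H) : leftCoset a H = leftCoset c H := by
  obtain ⟨⟨_, h1, hopH, hinvH, hbij⟩, hL⟩ := hH
  obtain ⟨h₀, hh₀, rfl⟩ := hc
  apply Set.Subset.antisymm
  · rintro x ⟨h', hh', rfl⟩
    refine ⟨gyr a h₀ (op (inv h₀) h'), ?_, ?_⟩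
    · have hmem : op (inv h₀) h' ∈ H := hopH _ (hinvH _ hh₀) _ hh'
      exact (hL a h₀ hh₀) ▸ Set.mem_image_of_mem _ hmem
    · show op (op a h₀) ((gyr a h₀) (op (inv h₀) h')) = op a h'
      rw [← gyr_op, left_cancel']
  · rintro x ⟨h'', hh'', rfl⟩
    have hf : (gyr a h₀).symm h'' ∈ H := by
      have himg : h'' ∈ gyr a h₀ '' H := by rw [hL a h₀ hh₀]; exact hh''
      obtain ⟨p, hp, hpe⟩ := himg
      rw [← hpe, Equiv.symm_apply_apply]; exact hp
    refine ⟨op h₀ ((gyr a h₀).symm h''), hopH _ hh₀ _ hf, ?_⟩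
    show op a (op h₀ ((gyr a h₀).symm h'')) = op (op a h₀) h''
    rw [gyr_op, Equiv.apply_symm_apply]

lemma leftCoset_disjoint_or_eq {H : Set G} (hH : IsLSubgyrogroup H) (a b : G) :
    leftCoset a H = leftCoset b H ∨ Disjoint (leftCoset a H) (leftCoset b H) := by
  by_cases hx : ∃ x, x ∈ leftCoset a H ∩ leftCoset b H
  · obtain ⟨x, hxa, hxb⟩ := hx
    exact Or.inl ((leftCoset_eq_of_mem hH hxa).trans (leftCoset_eq_of_mem hH hxb).symm)
  · push_neg at hx
    exact Or.inr (Set.disjoint_left.mpr fun y hy hy' => hx y ⟨hy, hy'⟩)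

lemma mem_coset_of_same {H : Set G} (hH : IsLSubgyrogroup H) {w x y : G}
    (hx : x ∈ leftCoset w H) (hy : y ∈ leftCoset w H) : y ∈ leftCoset x H := by
  rw [← leftCoset_eq_of_mem hH hx]; exact hy

lemma finite_cosets [TopologicalSpace G] (hc : ContinuousGyroOps G) {W H : Set G}
    (hWc : IsCompact W) (hH : IsLSubgyrogroup H) (hHopen : IsOpen H) :
    Set.Finite {C : Set G | ∃ w ∈ W, C = leftCoset w H} := by
  have h1 : one ∈ H := hH.1.2.1
  obtain ⟨t, hcover⟩ := hWc.elim_nhds_subcover' (fun w _ => leftCoset w H)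
    (fun w _ => coset_mem_nhds hc (hHopen.mem_nhds h1) w)
  apply Set.Finite.subset (t.finite_toSet.image (fun w => leftCoset w.1 H))
  rintro C ⟨w, hw, rfl⟩
  obtain ⟨i, hi⟩ := Set.mem_iUnion.mp (hcover hw)
  obtain ⟨hit, hiw⟩ := Set.mem_iUnion.mp hi
  exact ⟨i, hit, leftCoset_eq_of_mem hH hiw⟩

end Gyrogroup

section PPoint

variable {X : Type u} [TopologicalSpace X]

lemma ppoint_of_chain_base {x : X} {ι : Sort*} (B : ι → Set X)
    (hB : ∀ i, B i ∈ nhds x) (hbase : ∀ V ∈ nhds x, ∃ i, B i ⊆ V)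
    (hchain : ∀ i j, B i ⊆ B j ∨ B j ⊆ B i)
    (hnc : ¬ (nhds x).IsCountablyGenerated) :
    ∀ s : ℕ → Set X, (∀ n, s n ∈ nhds x) → (⋂ n, s n) ∈ nhds x := by
  intro s hs
  choose a ha using fun n => hbase (s n) (hs n)
  by_cases hall : ∀ V ∈ nhds x, ∃ n, B (a n) ⊆ V
  · exfalso
    apply hnc
    have hbasis : (nhds x).HasBasis (fun _ : ℕ => True) (fun n => B (a n)) := by
      constructor
      intro V
      constructor
      · intro hV
        obtain ⟨n, hn⟩ := hall V hV
        exact ⟨n, trivial, hn⟩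
      · rintro ⟨n, -, hn⟩
        exact Filter.mem_of_superset (hB (a n)) hn
    exact hbasis.isCountablyGenerated
  · push_neg at hall
    obtain ⟨V, hV, hVn⟩ := hall
    obtain ⟨i, hi⟩ := hbase V hV
    have hsub : ∀ n, B i ⊆ B (a n) := by
      intro n
      rcases hchain (a n) i with hcase | hcase
      · exact absurd (hcase.trans hi) (hVn n)
      · exact hcase
    exact Filter.mem_of_superset (hB i) (Set.subset_iInter fun n => (hsub n).trans (ha n))

lemma ppoint_transfer {Y : Type u} [TopologicalSpace Y]
    (φ : X ≃ₜ Y) (x : X)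
    (h : ∀ s : ℕ → Set Y, (∀ n, s n ∈ nhds (φ x)) → (⋂ n, s n) ∈ nhds (φ x)) :
    ∀ s : ℕ → Set X, (∀ n, s n ∈ nhds x) → (⋂ n, s n) ∈ nhds x := by
  intro s hs
  have h1 : ∀ n, φ.symm ⁻¹' (s n) ∈ nhds (φ x) := fun n =>
    φ.symm.continuous.continuousAt.preimage_mem_nhds
      (by rw [Homeomorph.symm_apply_apply]; exact hs n)
  have h2 := h _ h1
  rw [← Set.preimage_iInter] at h2
  have h4 := φ.continuous.continuousAt.preimage_mem_nhds (x := x) h2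
  rwa [← Set.preimage_comp, show (φ.symm ∘ φ : X → X) = id from funext φ.symm_apply_apply,
    Set.preimage_id] at h4

lemma ctblygen_transfer {Y : Type u} [TopologicalSpace Y] (φ : X ≃ₜ Y) (x : X)
    (h : (nhds (φ x)).IsCountablyGenerated) : (nhds x).IsCountablyGenerated := by
  have heq : nhds x = Filter.comap φ (nhds (φ x)) := by
    rw [φ.comap_nhds_eq (φ x), Homeomorph.symm_apply_apply]
  rw [heq]
  haveI := h
  exact Filter.comap.isCountablyGenerated _ _

end PPoint

section Partition

variable {X : Type u} [TopologicalSpace X]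

lemma grow_partition {P : Set X} {𝒞 : Set (Set X)}
    (split2 : ∀ Q : Set X, Q.Nonempty → IsClopen Q → Q ⊆ P →
      ∃ Q1 Q2 : Set X, Q1.Nonempty ∧ Q2.Nonempty ∧ IsClopen Q1 ∧ IsClopen Q2 ∧
        Disjoint Q1 Q2 ∧ Q1 ∪ Q2 = Q)
    (s : Finset (Set X))
    (hne : s.Nonempty)
    (hgood : ∀ Q ∈ s, Q.Nonempty ∧ IsClopen Q ∧ Q ⊆ P ∧ ∃ C ∈ 𝒞, Q ⊆ C)
    (hdisj : ∀ Q ∈ s, ∀ Q' ∈ s, Q ≠ Q' → Disjoint Q Q')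
    (hunion : ⋃₀ (s : Set (Set X)) = P) :
    ∀ j : ℕ, ∃ s' : Finset (Set X), s'.card = s.card + j ∧ s'.Nonempty ∧
      (∀ Q ∈ s', Q.Nonempty ∧ IsClopen Q ∧ Q ⊆ P ∧ ∃ C ∈ 𝒞, Q ⊆ C) ∧
      (∀ Q ∈ s', ∀ Q' ∈ s', Q ≠ Q' → Disjoint Q Q') ∧
      ⋃₀ (s' : Set (Set X)) = P := by
  classical
  intro j
  induction j with
  | zero => exact ⟨s, rfl, hne, hgood, hdisj, hunion⟩
  | succ m ih =>
    obtain ⟨s', hcard, hne', hgood', hdisj', hunion'⟩ := ih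
    obtain ⟨Q, hQ⟩ := hne'
    obtain ⟨hQne, hQclopen, hQP, C, hC, hQC⟩ := hgood' Q hQ
    obtain ⟨Q1, Q2, h1ne, h2ne, h1cl, h2cl, h12, h12u⟩ := split2 Q hQne hQclopen hQP
    have hQ1subQ : Q1 ⊆ Q := h12u ▸ Set.subset_union_left
    have hQ2subQ : Q2 ⊆ Q := h12u ▸ Set.subset_union_right
    have hnotinerase : ∀ R : Set X, R.Nonempty → R ⊆ Q → R ∉ s'.erase Q := by
      intro R hRne hRQ hmem
      obtain ⟨x, hx⟩ := hRne
      exact Set.disjoint_left.mp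
        (hdisj' R (Finset.mem_of_mem_erase hmem) Q hQ (Finset.ne_of_mem_erase hmem))
        hx (hRQ hx)
    have hQ1notin : Q1 ∉ s'.erase Q := hnotinerase Q1 h1ne hQ1subQ
    have hQ2notin : Q2 ∉ s'.erase Q := hnotinerase Q2 h2ne hQ2subQ
    have hQ1ne2 : Q1 ≠ Q2 := by
      intro he
      obtain ⟨x, hx⟩ := h1ne
      exact Set.disjoint_left.mp h12 hx (he ▸ hx)
    have hmem3 : ∀ S : Set X, S ∈ insert Q1 (insert Q2 (s'.erase Q)) →
        S = Q1 ∨ S = Q2 ∨ S ∈ s'.erase Q := by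
      intro S hS
      rcases Finset.mem_insert.mp hS with hcase | hS
      · exact Or.inl hcase
      rcases Finset.mem_insert.mp hS with hcase | hS
      · exact Or.inr (Or.inl hcase)
      · exact Or.inr (Or.inr hS)
    have hdQ : ∀ R ∈ s'.erase Q, Disjoint Q R := fun R hR =>
      hdisj' Q hQ R (Finset.mem_of_mem_erase hR) (Ne.symm (Finset.ne_of_mem_erase hR))
    refine ⟨insert Q1 (insert Q2 (s'.erase Q)), ?_, ⟨Q1, Finset.mem_insert_self _ _⟩,
      ?_, ?_, ?_⟩
    · rw [Finset.card_insert_of_notMem (by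
          rw [Finset.mem_insert]
          rintro (hcase | hcase)
          exacts [hQ1ne2 hcase, hQ1notin hcase]),
        Finset.card_insert_of_notMem hQ2notin, Finset.card_erase_of_mem hQ]
      have hpos : 1 ≤ s'.card := Finset.card_pos.mpr ⟨Q, hQ⟩
      omega
    · intro R hR
      rcases hmem3 R hR with rfl | rfl | hR3
      · exact ⟨h1ne, h1cl, hQ1subQ.trans hQP, C, hC, hQ1subQ.trans hQC⟩
      · exact ⟨h2ne, h2cl, hQ2subQ.trans hQP, C, hC, hQ2subQ.trans hQC⟩
      · exact hgood' R (Finset.mem_of_mem_erase hR3)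
    · intro R hR R' hR' hne2
      rcases hmem3 R hR with rfl | rfl | hR3 <;>
        rcases hmem3 R' hR' with rfl | rfl | hR3'
      · exact absurd rfl hne2
      · exact h12
      · exact (hdQ R' hR3').mono_left hQ1subQ
      · exact h12.symm
      · exact absurd rfl hne2
      · exact (hdQ R' hR3').mono_left hQ2subQ
      · exact ((hdQ R hR3).mono_left hQ1subQ).symm
      · exact ((hdQ R hR3).mono_left hQ2subQ).symm
      · exact hdisj' R (Finset.mem_of_mem_erase hR3) R' (Finset.mem_of_mem_erase hR3') hne2
    · rw [Finset.coe_insert, Set.sUnion_insert, Finset.coe_insert, Set.sUnion_insert,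
        ← Set.union_assoc, h12u, ← Set.sUnion_insert, ← Finset.coe_insert,
        Finset.insert_erase hQ, hunion']

lemma exists_fin_partition {P : Set X} {𝒞 : Set (Set X)}
    (hPne : P.Nonempty) (hPclopen : IsClopen P)
    (h𝒞fin : 𝒞.Finite) (h𝒞clopen : ∀ C ∈ 𝒞, IsClopen C)
    (h𝒞disj : ∀ C ∈ 𝒞, ∀ C' ∈ 𝒞, C ≠ C' → Disjoint C C')
    (h𝒞cover : P ⊆ ⋃₀ 𝒞)
    (split2 : ∀ Q : Set X, Q.Nonempty → IsClopen Q → Q ⊆ P →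
      ∃ Q1 Q2 : Set X, Q1.Nonempty ∧ Q2.Nonempty ∧ IsClopen Q1 ∧ IsClopen Q2 ∧
        Disjoint Q1 Q2 ∧ Q1 ∪ Q2 = Q)
    {k : ℕ} (hk : h𝒞fin.toFinset.card ≤ 2 ^ k) :
    ∃ D : Fin (2 ^ k) → Set X, (∀ i, (D i).Nonempty) ∧ (∀ i, IsClopen (D i)) ∧
      (∀ i, D i ⊆ P) ∧ (∀ i j, i ≠ j → Disjoint (D i) (D j)) ∧ ((⋃ i, D i) = P) ∧
      (∀ i, ∃ C ∈ 𝒞, D i ⊆ C) := by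
  classical
  set s0 : Finset (Set X) :=
    (h𝒞fin.toFinset.image (fun C => P ∩ C)).filter (fun Q => Q.Nonempty) with hs0
  have hs0mem : ∀ Q : Set X, Q ∈ s0 ↔ (∃ C ∈ 𝒞, Q = P ∩ C) ∧ Q.Nonempty := by
    intro Q
    rw [hs0, Finset.mem_filter, Finset.mem_image]
    constructor
    · rintro ⟨⟨C, hC, rfl⟩, hne⟩
      exact ⟨⟨C, (Set.Finite.mem_toFinset _).mp hC, rfl⟩, hne⟩
    · rintro ⟨⟨C, hC, rfl⟩, hne⟩
      exact ⟨⟨C, (Set.Finite.mem_toFinset _).mpr hC, rfl⟩, hne⟩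
  have hs0good : ∀ Q ∈ s0, Q.Nonempty ∧ IsClopen Q ∧ Q ⊆ P ∧ ∃ C ∈ 𝒞, Q ⊆ C := by
    intro Q hQ
    obtain ⟨⟨C, hC, rfl⟩, hne⟩ := (hs0mem Q).mp hQ
    exact ⟨hne, hPclopen.inter (h𝒞clopen C hC), Set.inter_subset_left,
      C, hC, Set.inter_subset_right⟩
  have hs0disj : ∀ Q ∈ s0, ∀ Q' ∈ s0, Q ≠ Q' → Disjoint Q Q' := by
    intro Q hQ Q' hQ' hne
    obtain ⟨⟨C, hC, rfl⟩, -⟩ := (hs0mem Q).mp hQ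
    obtain ⟨⟨C', hC', rfl⟩, -⟩ := (hs0mem Q').mp hQ'
    have hCC : C ≠ C' := fun he => hne (by rw [he])
    exact ((h𝒞disj C hC C' hC' hCC).mono_left Set.inter_subset_right).mono_right
      Set.inter_subset_right
  have hs0union : ⋃₀ (s0 : Set (Set X)) = P := by
    apply Set.Subset.antisymm
    · rintro x ⟨Q, hQ, hxQ⟩
      obtain ⟨-, -, hQP, -⟩ := hs0good Q hQ
      exact hQP hxQ
    · intro x hx
      obtain ⟨C, hC, hxC⟩ := h𝒞cover hx
      exact ⟨P ∩ C, (hs0mem _).mpr ⟨⟨C, hC, rfl⟩, ⟨x, hx, hxC⟩⟩, hx, hxC⟩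
  have hs0ne : s0.Nonempty := by
    obtain ⟨x, hx⟩ := hPne
    obtain ⟨C, hC, hxC⟩ := h𝒞cover hx
    exact ⟨P ∩ C, (hs0mem _).mpr ⟨⟨C, hC, rfl⟩, ⟨x, hx, hxC⟩⟩⟩
  have hcard0 : s0.card ≤ 2 ^ k :=
    le_trans (le_trans (Finset.card_filter_le _ _) Finset.card_image_le) hk
  obtain ⟨s', hcard', hne', hgood', hdisj', hunion'⟩ :=
    grow_partition split2 s0 hs0ne hs0good hs0disj hs0union (2 ^ k - s0.card)
  have hcardeq : s'.card = 2 ^ k := by omega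
  let e := s'.equivFinOfCardEq hcardeq
  refine ⟨fun i => (e.symm i).1, fun i => (hgood' _ (e.symm i).2).1,
    fun i => (hgood' _ (e.symm i).2).2.1,
    fun i => (hgood' _ (e.symm i).2).2.2.1, ?_, ?_, fun i => (hgood' _ (e.symm i).2).2.2.2⟩
  · intro i j hij
    refine hdisj' _ (e.symm i).2 _ (e.symm j).2 ?_
    intro hval
    exact hij (by
      have : e.symm i = e.symm j := Subtype.ext hval
      exact e.symm.injective this)
  · apply Set.Subset.antisymm
    · apply Set.iUnion_subset
      intro i
      exact (hgood' _ (e.symm i).2).2.2.1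
    · intro x hx
      rw [← hunion'] at hx
      obtain ⟨Q, hQ, hxQ⟩ := hx
      refine Set.mem_iUnion.mpr ⟨e ⟨Q, hQ⟩, ?_⟩
      rw [Equiv.symm_apply_apply]
      exact hxQ

end Partition
/-- An infinite locally compact totally disconnected strongly topologically orderable
gyrogroup is discrete or contains a clopen L-subgyrogroup homeomorphic to the Cantor
set. -/
theorem stmt16 {G : Type u} [Gyrogroup G] [TopologicalSpace G]
    [Infinite G] [LocallyCompactSpace G] [TotallyDisconnectedSpace G]
    (h : StronglyTopologicallyOrderable G) :
    DiscreteTopology G ∨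
    ∃ H : Set G, IsClopen H ∧ IsLSubgyrogroup H ∧ Nonempty (H ≃ₜ (ℕ → Bool)) := by
  classical
  by_cases hdisc : DiscreteTopology G
  · exact Or.inl hdisc
  right
  obtain ⟨hst, l, hl⟩ := h
  have hc : ContinuousGyroOps G := hst.1
  letI := l
  haveI : OrderTopology G := ⟨hl⟩
  -- Step A : the neighborhood filter of the identity is countably generated
  have hCG : (nhds (one : G)).IsCountablyGenerated := by
    by_contra hnc
    obtain ⟨H, hHclopen, hHcomp, hHL, -⟩ := exists_clopen_Lsub hst Filter.univ_mem
    have h1H : one ∈ H := hHL.1.2.1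
    obtain ⟨m, hmgr⟩ := hHcomp.exists_isGreatest ⟨one, h1H⟩
    obtain ⟨q, hqH, hqne⟩ := exists_ne_of_mem_open hc hdisc hHclopen.isOpen hmgr.1
    have hqlt : q < m := lt_of_le_of_ne (hmgr.2 hqH) hqne
    have hnotCGm : ¬ (nhds m).IsCountablyGenerated := by
      intro hcg
      apply hnc
      apply ctblygen_transfer (transHomeo hc one m) one
      rw [transHomeo_apply]
      exact hcg
    have hPm : ∀ s : ℕ → Set G, (∀ n, s n ∈ nhds m) → (⋂ n, s n) ∈ nhds m := by
      refine ppoint_of_chain_base (ι := {a : G // a < m})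
        (B := fun a => Set.Ioi a.1 ∩ H) ?_ ?_ ?_ hnotCGm
      · intro a
        exact Filter.inter_mem (isOpen_Ioi.mem_nhds a.2) (hHclopen.isOpen.mem_nhds hmgr.1)
      · intro V hV
        obtain ⟨l', hl'lt, hsub⟩ := exists_Ioc_subset_of_mem_nhds hV ⟨q, hqlt⟩
        exact ⟨⟨l', hl'lt⟩, fun x hx => hsub ⟨hx.1, hmgr.2 hx.2⟩⟩
      · intro i j
        rcases le_total i.1 j.1 with hle | hle
        · exact Or.inr (Set.inter_subset_inter_left H (Set.Ioi_subset_Ioi hle))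
        · exact Or.inl (Set.inter_subset_inter_left H (Set.Ioi_subset_Ioi hle))
    have hP1 : ∀ s : ℕ → Set G, (∀ n, s n ∈ nhds (one : G)) →
        (⋂ n, s n) ∈ nhds (one : G) := by
      apply ppoint_transfer (transHomeo hc one m) one
      rw [transHomeo_apply]
      exact hPm
    have hPz : ∀ z : G, ∀ s : ℕ → Set G, (∀ n, s n ∈ nhds z) → (⋂ n, s n) ∈ nhds z := by
      intro z
      apply ppoint_transfer (transHomeo hc z one) z
      rw [transHomeo_apply]
      exact hP1
    have hstep : ∀ Hh : Set G, (IsClopen Hh ∧ IsCompact Hh ∧ IsLSubgyrogroup Hh) →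
        ∃ x : G, ∃ H' : Set G, (IsClopen H' ∧ IsCompact H' ∧ IsLSubgyrogroup H') ∧
          H' ⊆ Hh ∧ x ∈ Hh ∧ x ∉ H' := by
      rintro Hh ⟨hclo, hcomp, hLs⟩
      have h1 : one ∈ Hh := hLs.1.2.1
      obtain ⟨x, hxH, hxne⟩ := exists_ne_of_mem_open hc hdisc hclo.isOpen h1
      have hone_ne : (one : G) ∈ ({x}ᶜ : Set G) := by
        simp only [Set.mem_compl_iff, Set.mem_singleton_iff]
        exact fun he => hxne he.symm
      have hO : Hh ∩ {x}ᶜ ∈ nhds (one : G) :=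
        Filter.inter_mem (hclo.isOpen.mem_nhds h1) (isOpen_compl_singleton.mem_nhds hone_ne)
      obtain ⟨H', h'clo, h'comp, h'L, h'sub⟩ := exists_clopen_Lsub hst hO
      exact ⟨x, H', ⟨h'clo, h'comp, h'L⟩, fun y hy => (h'sub hy).1, hxH,
        fun hx => (h'sub hx).2 rfl⟩
    choose xf Hf hPred hsubf hmemf hnotf using hstep
    let seq : ℕ → {Hh : Set G // IsClopen Hh ∧ IsCompact Hh ∧ IsLSubgyrogroup Hh} :=
      fun n => Nat.rec ⟨H, hHclopen, hHcomp, hHL⟩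
        (fun _ p => ⟨Hf p.1 p.2, hPred p.1 p.2⟩) n
    let xs : ℕ → G := fun n => xf (seq n).1 (seq n).2
    have hxs_mem : ∀ n, xs n ∈ (seq n).1 := fun n => hmemf _ _
    have hxs_not : ∀ n, xs n ∉ (seq (n+1)).1 := fun n => hnotf _ _
    have hsucc_sub : ∀ n, (seq (n+1)).1 ⊆ (seq n).1 := fun n => hsubf _ _
    have hdec : ∀ n m2 : ℕ, n ≤ m2 → (seq m2).1 ⊆ (seq n).1 := by
      intro n m2 hnm
      induction m2, hnm using Nat.le_induction with
      | base => exact subset_rfl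
      | succ p hp ih => exact (hsucc_sub p).trans ih
    have hxs_in0 : ∀ n, xs n ∈ H := fun n => hdec 0 n (Nat.zero_le n) (hxs_mem n)
    have hle : Filter.map xs Filter.atTop ≤ Filter.principal H := by
      rw [Filter.le_principal_iff, Filter.mem_map]
      exact Filter.univ_mem' hxs_in0
    obtain ⟨z, hzH, hz⟩ := hHcomp.exists_clusterPt hle
    have hzin : ∀ k2, z ∈ (seq k2).1 := by
      intro k2
      by_contra hzk
      have hU : ((seq k2).1)ᶜ ∈ nhds z := ((seq k2).2.1.isClosed.isOpen_compl).mem_nhds hzk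
      have hV : xs '' Set.Ici k2 ∈ Filter.map xs Filter.atTop := by
        rw [Filter.mem_map]
        exact Filter.mem_of_superset (Filter.Ici_mem_atTop k2) (Set.subset_preimage_image _ _)
      obtain ⟨y, hy1, hy2⟩ := clusterPt_iff_nonempty.mp hz hU hV
      obtain ⟨n, hn, rfl⟩ := hy2
      exact hy1 (hdec k2 n hn (hxs_mem n))
    have hPint : (⋂ k2, (seq k2).1) ∈ nhds z :=
      hPz z (fun k2 => (seq k2).1) (fun k2 => (seq k2).2.1.isOpen.mem_nhds (hzin k2))
    obtain ⟨y, hy1, hy2⟩ := clusterPt_iff_nonempty.mp hz hPint Filter.range_mem_map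
    obtain ⟨n, rfl⟩ := hy2
    exact hxs_not n (Set.mem_iInter.mp hy1 (n+1))
  -- Step B : a decreasing base of clopen compact L-subgyrogroups
  obtain ⟨Us, hUs⟩ := (nhds (one : G)).exists_antitone_basis
  have hVD : ∀ O : Set G, O ∈ nhds (one : G) → ∃ Hh : Set G,
      (IsClopen Hh ∧ IsCompact Hh ∧ IsLSubgyrogroup Hh) ∧ Hh ⊆ O := by
    intro O hO
    obtain ⟨Hh, h1, h2, h3, h4⟩ := exists_clopen_Lsub hst hO
    exact ⟨Hh, ⟨h1, h2, h3⟩, h4⟩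
  choose VD hVDp hVDs using hVD
  let Hs : ℕ → {Hh : Set G // IsClopen Hh ∧ IsCompact Hh ∧ IsLSubgyrogroup Hh} :=
    fun n => Nat.rec
      ⟨VD (Us 0) (hUs.1.mem_of_mem trivial), hVDp _ _⟩
      (fun p ih => ⟨VD (Us (p+1) ∩ ih.1)
          (Filter.inter_mem (hUs.1.mem_of_mem trivial)
            (ih.2.1.isOpen.mem_nhds ih.2.2.2.1.2.1)),
        hVDp _ _⟩) n
  have hHs1 : ∀ n, one ∈ (Hs n).1 := fun n => (Hs n).2.2.2.1.2.1
  have hHssub : ∀ n, (Hs (n+1)).1 ⊆ Us (n+1) ∩ (Hs n).1 := fun n => hVDs _ _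
  have hHsU : ∀ n, (Hs n).1 ⊆ Us n := by
    intro n
    cases n with
    | zero => exact hVDs _ _
    | succ p => exact (hHssub p).trans Set.inter_subset_left
  have hHsbase : ∀ V ∈ nhds (one : G), ∃ n, (Hs n).1 ⊆ V := by
    intro V hV
    obtain ⟨n, -, hn⟩ := hUs.1.mem_iff.mp hV
    exact ⟨n, (hHsU n).trans hn⟩
  have hcosetbase : ∀ (x : G) (V : Set G), V ∈ nhds x →
      ∃ n, leftCoset x (Hs n).1 ⊆ V := by
    intro x V hV
    have hpre : (op x : G → G) ⁻¹' V ∈ nhds (one : G) :=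
      (continuous_op_left hc x).continuousAt.preimage_mem_nhds (by rwa [op_one])
    obtain ⟨n, hn⟩ := hHsbase _ hpre
    refine ⟨n, ?_⟩
    rintro y ⟨h', hh', rfl⟩
    exact hn hh'
  set W := (Hs 0).1 with hWdef
  have hWclopen : IsClopen W := (Hs 0).2.1
  have hWcomp : IsCompact W := (Hs 0).2.2.1
  have hWL : IsLSubgyrogroup W := (Hs 0).2.2.2
  have hWne : W.Nonempty := ⟨one, hHs1 0⟩
  -- binary splitting of clopen pieces
  have hsplit2 : ∀ Q : Set G, Q.Nonempty → IsClopen Q → Q ⊆ W →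
      ∃ Q1 Q2 : Set G, Q1.Nonempty ∧ Q2.Nonempty ∧ IsClopen Q1 ∧ IsClopen Q2 ∧
        Disjoint Q1 Q2 ∧ Q1 ∪ Q2 = Q := by
    intro Q hQne hQclopen hQW
    obtain ⟨p, hp⟩ := hQne
    obtain ⟨q, hqQ, hqnep⟩ := exists_ne_of_mem_open hc hdisc hQclopen.isOpen hp
    have hpq : p ∈ ({q}ᶜ : Set G) := by
      simp only [Set.mem_compl_iff, Set.mem_singleton_iff]
      exact fun he => hqnep he.symm
    have hQq : Q ∩ {q}ᶜ ∈ nhds p :=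
      Filter.inter_mem (hQclopen.isOpen.mem_nhds hp) (isOpen_compl_singleton.mem_nhds hpq)
    obtain ⟨n, hn⟩ := hcosetbase p _ hQq
    refine ⟨leftCoset p (Hs n).1, Q \ leftCoset p (Hs n).1,
      ⟨p, mem_leftCoset_self (hHs1 n) p⟩, ⟨q, hqQ, fun hmem => (hn hmem).2 rfl⟩,
      isClopen_coset hc (Hs n).2.1 p, hQclopen.diff (isClopen_coset hc (Hs n).2.1 p),
      Set.disjoint_sdiff_right, ?_⟩
    exact Set.union_diff_cancel (fun y hy => (hn hy).1)
  have hCCfin : ∀ n, Set.Finite {C : Set G | ∃ w ∈ W, C = leftCoset w (Hs n).1} :=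
    fun n => finite_cosets hc hWcomp (Hs n).2.2.2 (Hs n).2.1.isOpen
  let T : ℕ → ℕ := fun n => (hCCfin n).toFinset.card + 1
  have hT1 : ∀ n, 1 ≤ T n := fun n => Nat.le_add_left 1 _
  have hTk : ∀ n, (hCCfin n).toFinset.card ≤ 2 ^ T n := by
    intro n
    calc (hCCfin n).toFinset.card ≤ 2 ^ (hCCfin n).toFinset.card :=
          le_of_lt Nat.lt_two_pow_self
    _ ≤ 2 ^ T n := Nat.pow_le_pow_right (by norm_num) (Nat.le_succ _)
  have hmain : Nonempty (W ≃ₜ ((n : ℕ) → Fin ((fun n => 2 ^ T n) n))) := by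
    apply cantor_of_splitting hWcomp hWne hWclopen (fun n => 2 ^ T n)
      (fun n x y => y ∈ leftCoset x (Hs n).1)
    · intro x hx y hy hxy
      have hxyc : x ∈ ({y}ᶜ : Set G) := by
        simp only [Set.mem_compl_iff, Set.mem_singleton_iff]
        exact hxy
      obtain ⟨n, hn⟩ := hcosetbase x {y}ᶜ (isOpen_compl_singleton.mem_nhds hxyc)
      exact ⟨n, fun hmem => (hn hmem) rfl⟩
    · intro n P hPne hPclopen hPW
      have hclo : ∀ C ∈ {C : Set G | ∃ w ∈ W, C = leftCoset w (Hs n).1}, IsClopen C := by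
        rintro C ⟨w, hw, rfl⟩
        exact isClopen_coset hc (Hs n).2.1 w
      have hdisjC : ∀ C ∈ {C : Set G | ∃ w ∈ W, C = leftCoset w (Hs n).1},
          ∀ C' ∈ {C : Set G | ∃ w ∈ W, C = leftCoset w (Hs n).1}, C ≠ C' → Disjoint C C' := by
        rintro C ⟨w, hw, rfl⟩ C' ⟨w', hw', rfl⟩ hne
        rcases leftCoset_disjoint_or_eq (Hs n).2.2.2 w w' with he | hd
        · exact absurd he hne
        · exact hd
      have hcov : P ⊆ ⋃₀ {C : Set G | ∃ w ∈ W, C = leftCoset w (Hs n).1} := fun x hx =>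
        ⟨leftCoset x (Hs n).1, ⟨x, hPW hx, rfl⟩, mem_leftCoset_self (hHs1 n) x⟩
      obtain ⟨D, hD1, hD2, hD3, hD4, hD5, hD6⟩ := exists_fin_partition hPne hPclopen
        (hCCfin n) hclo hdisjC hcov
        (fun Q hq hcl hsub => hsplit2 Q hq hcl (hsub.trans hPW)) (hTk n)
      refine ⟨D, hD1, hD2, hD3, hD4, hD5, ?_⟩
      intro a x hx y hy
      obtain ⟨C, hC, hsubC⟩ := hD6 a
      obtain ⟨w, hw, rfl⟩ := hC
      exact mem_coset_of_same (Hs n).2.2.2 (hsubC hx) (hsubC hy)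
  obtain ⟨e1⟩ := hmain
  obtain ⟨e2⟩ := pi_fin_two_pow_homeo T hT1
  exact ⟨W, hWclopen, hWL, ⟨e1.trans e2⟩⟩
end

section
/- Every locally compact strongly topologically orderable gyrogroup is metrizable. -/
open Set Topology

universe u

namespace STG

open Filter Gyrogroup

universe v

/-! ### Basic gyrogroup algebra -/

variable {G : Type u} [Gyrogroup G]

theorem op_left_cancel {a b c : G} (h : op a b = op a c) : b = c := by
  have hb := gyr_op (inv a) a b
  rw [Gyrogroup.inv_op, one_op] at hb
  have hc := gyr_op (inv a) a c
  rw [Gyrogroup.inv_op, one_op] at hc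
  have h2 : gyr (inv a) a b = gyr (inv a) a c := by
    rw [← hb, ← hc, h]
  exact (gyr (inv a) a).injective h2

theorem gyr_one_left (a f : G) : gyr (one : G) a f = f := by
  have h4 := gyr_op (one : G) a f
  rw [one_op, one_op] at h4
  exact (op_left_cancel h4).symm

theorem gyr_self_inv (a f : G) : gyr (inv a) a f = f := by
  have h := loop (inv a) a
  rw [Gyrogroup.inv_op] at h
  rw [h, gyr_one_left]

theorem inv_op_cancel (a b : G) : op (inv a) (op a b) = b := by
  have h1 := gyr_op (inv a) a b
  rw [Gyrogroup.inv_op, one_op] at h1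
  rw [h1, gyr_self_inv]

theorem gyr_inv_self (a f : G) : gyr a (inv a) f = f := by
  have h := loop a (inv a)
  rw [Gyrogroup.op_inv] at h
  rw [h, gyr_one_left]

theorem op_inv_cancel (a b : G) : op a (op (inv a) b) = b := by
  have h1 := gyr_op a (inv a) b
  rw [Gyrogroup.op_inv, one_op, gyr_inv_self] at h1
  exact h1

theorem eq_inv_of_op_eq_one {a b : G} (h : op a b = one) : b = inv a :=
  op_left_cancel (h.trans (Gyrogroup.op_inv a).symm)

theorem inv_invol (a : G) : inv (inv a) = a :=
  (unique_inv (inv a) a ⟨Gyrogroup.op_inv a, Gyrogroup.inv_op a⟩).symm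

theorem inv_one' : inv (one : G) = one :=
  (unique_inv one one ⟨one_op one, one_op one⟩).symm

theorem gyr_one_arg (x y : G) : gyr x y (one : G) = one := by
  have h := gyr_hom x y one one
  rw [one_op] at h
  have h2 : op (gyr x y (one : G)) (one : G) = op (gyr x y (one : G)) (gyr x y (one : G)) := by
    rw [op_one]; exact h
  exact (op_left_cancel h2).symm

theorem gyr_inv (x y a : G) : gyr x y (inv a) = inv (gyr x y a) :=
  eq_inv_of_op_eq_one (by rw [← gyr_hom, Gyrogroup.op_inv, gyr_one_arg])

theorem inv_op_rev (a b : G) : inv (op a b) = gyr a b (op (inv b) (inv a)) := by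
  refine (eq_inv_of_op_eq_one ?_).symm
  rw [← gyr_op, op_inv_cancel, Gyrogroup.op_inv]

theorem op_decomp (x y z : G) :
    op (inv x) z = op (op (inv x) y) (gyr (inv x) y (op (inv y) z)) := by
  conv_lhs => rw [← op_inv_cancel y z, gyr_op]

/-! ### Topological helpers -/

variable [TopologicalSpace G]

theorem contL (hop : Continuous fun p : G × G => op p.1 p.2) (a : G) :
    Continuous fun b : G => op a b :=
  hop.comp (Continuous.prodMk_right a)

/-- Left translation as a homeomorphism. -/
def homeoL (hop : Continuous fun p : G × G => op p.1 p.2) (a : G) : G ≃ₜ G :=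
  ⟨⟨fun b => op a b, fun b => op (inv a) b, fun b => inv_op_cancel a b,
    fun b => op_inv_cancel a b⟩, contL hop a, contL hop (inv a)⟩

theorem nhds_translate (hop : Continuous fun p : G × G => op p.1 p.2) (a : G) :
    𝓝 a = Filter.map (fun b => op a b) (𝓝 (one : G)) := by
  have h := (homeoL hop a).map_nhds_eq (one : G)
  have h2 : (homeoL hop a) (one : G) = a := op_one a
  rw [h2] at h
  exact h.symm

/-! ### The first uncountable ordinal as an index type -/

abbrev W1 : Type := (Cardinal.aleph 1).ord.ToType

theorem W1_iio_countable (j : W1) : (Set.Iio j).Countable :=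
  (Cardinal.countable_iff_lt_aleph_one _).2 (Cardinal.mk_Iio_toType_ord_lt j)

theorem W1_unbounded {A : Set W1} (hA : A.Countable) : ∃ j : W1, ∀ a ∈ A, a < j := by
  by_contra hcon
  push_neg at hcon
  have h2 : (Set.univ : Set W1) ⊆ ⋃ a ∈ A, Set.Iic a := by
    intro j _
    obtain ⟨a, haA, hja⟩ := hcon j
    exact Set.mem_biUnion haA hja
  have hbig : (⋃ a ∈ A, Set.Iic a).Countable :=
    hA.biUnion fun a _ => by
      rw [← Set.Iio_insert]; exact (W1_iio_countable a).insert a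
  have h1 : (Set.univ : Set W1).Countable := hbig.mono h2
  have h3 : Countable W1 := Set.countable_univ_iff.1 h1
  have h4 : Cardinal.mk W1 ≤ Cardinal.aleph0 := Cardinal.mk_le_aleph0_iff.2 h3
  rw [show Cardinal.mk W1 = Cardinal.aleph 1 from by rw [Cardinal.mk_toType, Cardinal.card_ord]] at h4
  exact absurd h4 (not_le.2 Cardinal.aleph0_lt_aleph_one)

instance : Nonempty W1 := by
  obtain ⟨j, -⟩ := W1_unbounded (Set.countable_empty (α := W1))
  exact ⟨j⟩

/-- Transfinite construction of a strictly decreasing `ω₁`-sequence inside a set with no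
countable "coinitial-from-outside" obstruction. -/
theorem exists_decreasing {α : Type v} [LinearOrder α] {S : Set α} {d0 : α} (hd0 : d0 ∈ S)
    (hlb : ∀ T : Set α, T.Countable → T ⊆ S → ∃ q ∈ S, ∀ t ∈ T, q < t) :
    ∃ z : W1 → α, (∀ j, z j ∈ S) ∧ (∀ i j, i < j → z j < z i) ∧ (∀ j, z j < d0) := by
  have wf : WellFounded ((· < ·) : W1 → W1 → Prop) := wellFounded_lt
  let T0 : ∀ j : W1, (∀ i, i < j → {x // x ∈ S}) → Set α := fun j rec =>
    insert d0 (⋃ i : {i : W1 // i ∈ Set.Iio j}, {(rec i.1 i.2 : α)})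
  have hT0c : ∀ j rec, (T0 j rec).Countable := by
    intro j rec
    haveI := (W1_iio_countable j).to_subtype
    exact (Set.countable_iUnion fun i => Set.countable_singleton _).insert _
  have hT0s : ∀ j rec, T0 j rec ⊆ S := by
    intro j rec t ht
    rcases Set.mem_insert_iff.1 ht with rfl | ht
    · exact hd0
    · obtain ⟨i, hi⟩ := Set.mem_iUnion.1 ht
      rw [Set.mem_singleton_iff] at hi
      rw [hi]; exact (rec i.1 i.2).2
  let F : ∀ j : W1, (∀ i, i < j → {x // x ∈ S}) → {x // x ∈ S} := fun j rec =>
    ⟨(hlb (T0 j rec) (hT0c j rec) (hT0s j rec)).choose,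
      (hlb (T0 j rec) (hT0c j rec) (hT0s j rec)).choose_spec.1⟩
  let f : W1 → {x // x ∈ S} := fun j => WellFounded.fix wf F j
  have hfix : ∀ j, f j = F j fun i _ => f i := fun j => WellFounded.fix_eq wf F j
  have hspec : ∀ j, ∀ t ∈ T0 j (fun i _ => f i), (f j : α) < t := by
    intro j
    have h := (hlb (T0 j fun i _ => f i) (hT0c j (fun i _ => f i)) (hT0s j (fun i _ => f i))).choose_spec.2
    intro t ht
    have : (f j : α) = (F j fun i _ => f i : α) := by rw [hfix j]
    rw [this]
    exact h t ht
  refine ⟨fun j => (f j : α), fun j => (f j).2, ?_, ?_⟩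
  · intro i j hij
    exact hspec j _ (Set.mem_insert_of_mem _ (Set.mem_iUnion.2 ⟨⟨i, hij⟩, rfl⟩))
  · intro j
    exact hspec j d0 (Set.mem_insert _ _)

/-! ### Monotone nets with cluster points converge -/

theorem tendsto_of_antitone_clusterPt {ι : Type v} [SemilatticeSup ι] [Nonempty ι]
    {α : Type w} [LinearOrder α] [TopologicalSpace α] [OrderTopology α]
    {z : ι → α} {p : α} (hz : Antitone z) (hp : ClusterPt p (Filter.map z Filter.atTop)) :
    Tendsto z atTop (𝓝 p) := by
  have hne : (𝓝 p ⊓ Filter.map z Filter.atTop).NeBot := hp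
  have hple : ∀ j, p ≤ z j := by
    intro j
    by_contra hc
    push_neg at hc
    have h1 : Set.Ioi (z j) ∈ 𝓝 p := Ioi_mem_nhds hc
    have h2 : z '' Set.Ici j ∈ Filter.map z Filter.atTop := image_mem_map (Ici_mem_atTop j)
    obtain ⟨w, hw1, hw2⟩ := hne.nonempty_of_mem (inter_mem (mem_inf_of_left h1) (mem_inf_of_right h2))
    obtain ⟨i, hi, rfl⟩ := hw2
    exact absurd (hz hi) (not_le.2 hw1)
  refine tendsto_order.2 ⟨fun b hb => Eventually.of_forall fun j => lt_of_lt_of_le hb (hple j),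
    fun b hb => ?_⟩
  have h1 : Set.Iio b ∈ 𝓝 p := Iio_mem_nhds hb
  have h2 : z '' Set.univ ∈ Filter.map z Filter.atTop := image_mem_map univ_mem
  obtain ⟨w, hw1, hw2⟩ := hne.nonempty_of_mem (inter_mem (mem_inf_of_left h1) (mem_inf_of_right h2))
  obtain ⟨i, -, rfl⟩ := hw2
  exact eventually_atTop.2 ⟨i, fun j hj => lt_of_le_of_lt (hz hj) hw1⟩

theorem tendsto_of_monotone_clusterPt {ι : Type v} [SemilatticeSup ι] [Nonempty ι]
    {α : Type w} [LinearOrder α] [TopologicalSpace α] [OrderTopology α]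
    {z : ι → α} {p : α} (hz : Monotone z) (hp : ClusterPt p (Filter.map z Filter.atTop)) :
    Tendsto z atTop (𝓝 p) := by
  have hne : (𝓝 p ⊓ Filter.map z Filter.atTop).NeBot := hp
  have hple : ∀ j, z j ≤ p := by
    intro j
    by_contra hc
    push_neg at hc
    have h1 : Set.Iio (z j) ∈ 𝓝 p := Iio_mem_nhds hc
    have h2 : z '' Set.Ici j ∈ Filter.map z Filter.atTop := image_mem_map (Ici_mem_atTop j)
    obtain ⟨w, hw1, hw2⟩ := hne.nonempty_of_mem (inter_mem (mem_inf_of_left h1) (mem_inf_of_right h2))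
    obtain ⟨i, hi, rfl⟩ := hw2
    exact absurd (hz hi) (not_le.2 hw1)
  refine tendsto_order.2 ⟨fun b hb => ?_,
    fun b hb => Eventually.of_forall fun j => lt_of_le_of_lt (hple j) hb⟩
  have h1 : Set.Ioi b ∈ 𝓝 p := Ioi_mem_nhds hb
  have h2 : z '' Set.univ ∈ Filter.map z Filter.atTop := image_mem_map univ_mem
  obtain ⟨w, hw1, hw2⟩ := hne.nonempty_of_mem (inter_mem (mem_inf_of_left h1) (mem_inf_of_right h2))
  obtain ⟨i, -, rfl⟩ := hw2
  exact eventually_atTop.2 ⟨i, fun j hj => lt_of_lt_of_le hw1 (hz hj)⟩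

/-! ### The key coinitiality lemma -/

theorem countable_coinitial_of_seq {α : Type v} [LinearOrder α] [TopologicalSpace α]
    [OrderTopology α]
    (m : α → α → α) (hm : Continuous fun p : α × α => m p.1 p.2) (e : α)
    (hme : ∀ z, m z e = z) (hcancel : ∀ z a, m z a = z → a = e)
    (x : ℕ → α) (hx : ∀ nn, x nn < e) (hxe : Tendsto x atTop (𝓝 e))
    (K : Set α) (hKc : IsCompact K) (hKn : K ∈ 𝓝 e) :
    ∃ T : Set α, T.Countable ∧ T ⊆ Set.Ioi e ∧ ∀ y ∈ Set.Ioi e, ∃ t ∈ T, t ≤ y := by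
  by_contra hcon
  push_neg at hcon
  have hlb : ∀ T : Set α, T.Countable → T ⊆ Set.Ioi e → ∃ q ∈ Set.Ioi e, ∀ t ∈ T, q < t := by
    intro T hc hsub
    obtain ⟨y, hy, hyt⟩ := hcon T hc hsub
    exact ⟨y, hy, fun t ht => hyt t ht⟩
  obtain ⟨q1, hq1, -⟩ := hlb ∅ Set.countable_empty (Set.empty_subset _)
  obtain ⟨u, hu, hIco⟩ := exists_Ico_subset_of_mem_nhds hKn ⟨q1, hq1⟩
  rcases Set.eq_empty_or_nonempty (Set.Ioo e u) with hemp | ⟨d0, hd0⟩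
  · obtain ⟨q2, hq2, hq2'⟩ := hlb {u} (Set.countable_singleton u) (by
      intro t ht; rw [Set.mem_singleton_iff] at ht; rw [ht]; exact hu)
    exact (Set.eq_empty_iff_forall_notMem.1 hemp) q2 ⟨hq2, hq2' u rfl⟩
  · have hIccK : Set.Icc e d0 ⊆ K := fun w hw => hIco ⟨hw.1, lt_of_le_of_lt hw.2 hd0.2⟩
    have hcpt : IsCompact (Set.Icc e d0) := hKc.of_isClosed_subset isClosed_Icc hIccK
    obtain ⟨z, hzS, hzdec, hzd0⟩ := exists_decreasing (S := Set.Ioi e) hd0.1 hlb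
    haveI hFne : (Filter.map z Filter.atTop).NeBot := Filter.map_neBot
    have hFle : Filter.map z Filter.atTop ≤ 𝓟 (Set.Icc e d0) :=
      le_principal_iff.2 (mem_map.2 (Eventually.of_forall fun j => ⟨(hzS j).le, (hzd0 j).le⟩))
    obtain ⟨p, -, hclus⟩ := hcpt hFle
    have hanti : Antitone z := by
      intro i j hij
      rcases eq_or_lt_of_le hij with rfl | hlt
      · exact le_refl _
      · exact (hzdec i j hlt).le
    have htend : Tendsto z atTop (𝓝 p) := tendsto_of_antitone_clusterPt hanti hclus
    have hple : ∀ j, p ≤ z j := fun j => hanti.le_of_tendsto htend j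
    have hnxt0 : ∀ j : W1, ∃ j', ∀ a ∈ ({j} : Set W1), a < j' :=
      fun j => W1_unbounded (Set.countable_singleton j)
    choose nxt hnxt using hnxt0
    have hjnxt : ∀ j, j < nxt j := fun j => hnxt j j rfl
    have hplt : ∀ j, p < z j := fun j => lt_of_le_of_lt (hple (nxt j)) (hzdec j (nxt j) (hjnxt j))
    have hsel : ∀ j : W1, ∃ k : ℕ, m (z (nxt j)) (x k) ∈ Set.Ioo p (z j) := by
      intro j
      have hc1 : Continuous fun a : α => m (z (nxt j)) a := hm.comp (Continuous.prodMk_right _)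
      have h2 := (hc1.tendsto e).comp hxe
      rw [hme] at h2
      have hmem : Set.Ioo p (z j) ∈ 𝓝 (z (nxt j)) :=
        isOpen_Ioo.mem_nhds ⟨hplt (nxt j), hzdec j (nxt j) (hjnxt j)⟩
      exact (h2.eventually_mem hmem).exists
    choose n hn using hsel
    have hfib : ∃ k : ℕ, ∀ b : W1, ∃ j, n j = k ∧ b < j := by
      by_contra hcon2
      push_neg at hcon2
      choose bnd hbnd using hcon2
      obtain ⟨js, hjs⟩ := W1_unbounded (Set.countable_range bnd)
      exact absurd (hbnd (n js) js rfl) (not_le.2 (hjs (bnd (n js)) (Set.mem_range_self _)))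
    obtain ⟨ks, hks⟩ := hfib
    set L : Filter W1 := Filter.atTop ⊓ 𝓟 {j | n j = ks} with hL
    haveI hLne : L.NeBot := by
      rw [hL, inf_principal_neBot_iff]
      intro U hU
      obtain ⟨b, hb⟩ := mem_atTop_sets.1 hU
      obtain ⟨j, hj1, hj2⟩ := hks b
      exact ⟨j, hb j hj2.le, hj1⟩
    have hevS : ∀ᶠ j in L, n j = ks := mem_inf_of_right (mem_principal_self _)
    have htendL : Tendsto z L (𝓝 p) := htend.mono_left inf_le_left
    have hw2 : Tendsto (fun j => m (z (nxt j)) (x ks)) L (𝓝 p) := by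
      refine tendsto_order.2 ⟨fun b hb => ?_, fun b hb => ?_⟩
      · filter_upwards [hevS] with j hj
        have h5 := hn j
        rw [hj] at h5
        exact lt_trans hb h5.1
      · have hev2 : ∀ᶠ j in L, z j < b := htendL.eventually_mem (Iio_mem_nhds hb)
        filter_upwards [hevS, hev2] with j hj hjb
        have h5 := hn j
        rw [hj] at h5
        exact lt_trans h5.2 hjb
    have hnxtL : Tendsto nxt L Filter.atTop := by
      rw [tendsto_atTop]
      intro b
      exact Filter.Eventually.filter_mono inf_le_left
        ((eventually_ge_atTop b).mono fun j hj => hj.trans (hjnxt j).le)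
    have hznxtL : Tendsto (fun j => z (nxt j)) L (𝓝 p) := htend.comp hnxtL
    have hw1 : Tendsto (fun j => m (z (nxt j)) (x ks)) L (𝓝 (m p (x ks))) :=
      (hm.tendsto (p, x ks)).comp (hznxtL.prodMk_nhds tendsto_const_nhds)
    exact absurd (hcancel p (x ks) (tendsto_nhds_unique hw1 hw2)) (ne_of_lt (hx ks))

theorem countable_cofinal_of_seq {α : Type v} [LinearOrder α] [TopologicalSpace α]
    [OrderTopology α]
    (m : α → α → α) (hm : Continuous fun p : α × α => m p.1 p.2) (e : α)
    (hme : ∀ z, m z e = z) (hcancel : ∀ z a, m z a = z → a = e)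
    (x : ℕ → α) (hx : ∀ nn, e < x nn) (hxe : Tendsto x atTop (𝓝 e))
    (K : Set α) (hKc : IsCompact K) (hKn : K ∈ 𝓝 e) :
    ∃ T : Set α, T.Countable ∧ T ⊆ Set.Iio e ∧ ∀ y ∈ Set.Iio e, ∃ t ∈ T, y ≤ t := by
  obtain ⟨T, h1, h2, h3⟩ :=
    countable_coinitial_of_seq (α := αᵒᵈ) m hm e hme hcancel x hx hxe K hKc hKn
  exact ⟨T, h1, h2, h3⟩

/-! ### Existence of a nontrivial sequence converging to the identity -/

theorem exists_ne_tendsto_one {G : Type u} [Gyrogroup G] [TopologicalSpace G] [LinearOrder G]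
    [OrderTopology G]
    (hop : Continuous fun p : G × G => op p.1 p.2)
    (hniso : ¬ IsOpen ({(one : G)} : Set G))
    (K : Set G) (hKc : IsCompact K) (hKn : K ∈ 𝓝 (one : G)) :
    ∃ c : ℕ → G, (∀ k, c k ≠ (one : G)) ∧ Tendsto c atTop (𝓝 (one : G)) := by
  obtain ⟨U, hUK, hUo, hUe⟩ := mem_nhds_iff.1 hKn
  have hUinf : U.Infinite := by
    by_contra hfin
    rw [Set.not_infinite] at hfin
    apply hniso
    have h1 : IsClosed (U \ {(one : G)}) := (hfin.subset Set.diff_subset).isClosed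
    have h2 := hUo.sdiff h1
    rwa [Set.diff_diff_cancel_left (Set.singleton_subset_iff.2 hUe)] at h2
  let emb : ℕ ↪ U := hUinf.natEmbedding _
  set q0 : ℕ → G := fun k => (emb k : G) with hq0def
  have hq0inj : Function.Injective q0 := fun a b hab =>
    emb.injective (Subtype.ext hab)
  have hq0U : ∀ k, q0 k ∈ U := fun k => (emb k).2
  obtain ⟨φ, hφ⟩ := exists_increasing_or_nonincreasing_subseq ((· < ·) : G → G → Prop) q0
  set q : ℕ → G := fun k => q0 (φ k) with hqdef
  have hqU : ∀ k, q k ∈ K := fun k => hUK (hq0U (φ k))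
  haveI hFne : (Filter.map q Filter.atTop).NeBot := Filter.map_neBot
  have hFle : Filter.map q Filter.atTop ≤ 𝓟 K :=
    le_principal_iff.2 (mem_map.2 (Eventually.of_forall hqU))
  obtain ⟨s, -, hclus⟩ := hKc hFle
  have key : ∃ s' : G, ∃ q' : ℕ → G, Tendsto q' atTop (𝓝 s') ∧ ∀ k, q' k ≠ s' := by
    rcases hφ with hmono | hanti
    · have hmono' : Monotone q := monotone_nat_of_le_succ fun k => (hmono k (k+1) k.lt_succ_self).le
      have htq : Tendsto q atTop (𝓝 s) := tendsto_of_monotone_clusterPt hmono' hclus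
      have hle : ∀ j, q j ≤ s := fun j => hmono'.ge_of_tendsto htq j
      exact ⟨s, q, htq, fun k =>
        ne_of_lt (lt_of_lt_of_le (hmono k (k+1) k.lt_succ_self) (hle (k+1)))⟩
    · have hstrict : ∀ a b, a < b → q b < q a := by
        intro a b hab
        refine lt_of_le_of_ne (not_lt.1 (hanti a b hab)) ?_
        intro he
        exact absurd (φ.injective (hq0inj he)) (Nat.ne_of_gt hab)
      have hanti' : Antitone q := antitone_nat_of_succ_le fun k => (hstrict k (k+1) k.lt_succ_self).le
      have htq : Tendsto q atTop (𝓝 s) := tendsto_of_antitone_clusterPt hanti' hclus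
      have hge : ∀ j, s ≤ q j := fun j => hanti'.le_of_tendsto htq j
      exact ⟨s, q, htq, fun k =>
        (ne_of_lt (lt_of_le_of_lt (hge (k+1)) (hstrict k (k+1) k.lt_succ_self))).symm⟩
  obtain ⟨s', q', htq, hne⟩ := key
  refine ⟨fun k => op (inv s') (q' k), fun k hk => ?_, ?_⟩
  · apply hne k
    have h3 : op s' (op (inv s') (q' k)) = op s' (one : G) := by
      rw [show op (inv s') (q' k) = (one : G) from hk]
    rw [op_inv_cancel, op_one] at h3
    exact h3
  · have h4 := ((contL hop (inv s')).tendsto s').comp htq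
    rwa [Gyrogroup.inv_op] at h4

/-! ### First countability at the identity -/

theorem nhds_isCountablyGenerated_of_cofinal_coinitial {α : Type v} [LinearOrder α]
    [TopologicalSpace α] [OrderTopology α] (e : α)
    (hL : ∃ T : Set α, T.Countable ∧ T ⊆ Set.Iio e ∧ ∀ y ∈ Set.Iio e, ∃ t ∈ T, y ≤ t)
    (hR : ∃ T : Set α, T.Countable ∧ T ⊆ Set.Ioi e ∧ ∀ y ∈ Set.Ioi e, ∃ t ∈ T, t ≤ y) :
    (𝓝 e).IsCountablyGenerated := by
  obtain ⟨Tl, hlc, hls, hlco⟩ := hL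
  obtain ⟨Tr, hrc, hrs, hrco⟩ := hR
  rw [nhds_eq_order e]
  have h1 : (⨅ b ∈ Set.Iio e, 𝓟 (Set.Ioi b)) = ⨅ b ∈ Tl, 𝓟 (Set.Ioi b) := by
    refine le_antisymm (le_iInf₂ fun b hb => iInf₂_le b (hls hb)) (le_iInf₂ fun b hb => ?_)
    obtain ⟨t, ht, hbt⟩ := hlco b hb
    exact le_trans (iInf₂_le t ht) (Filter.principal_mono.2 (Set.Ioi_subset_Ioi hbt))
  have h2 : (⨅ b ∈ Set.Ioi e, 𝓟 (Set.Iio b)) = ⨅ b ∈ Tr, 𝓟 (Set.Iio b) := by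
    refine le_antisymm (le_iInf₂ fun b hb => iInf₂_le b (hrs hb)) (le_iInf₂ fun b hb => ?_)
    obtain ⟨t, ht, htb⟩ := hrco b hb
    exact le_trans (iInf₂_le t ht) (Filter.principal_mono.2 (Set.Iio_subset_Iio htb))
  rw [h1, h2]
  have i1 : (⨅ b ∈ Tl, 𝓟 (Set.Ioi b)).IsCountablyGenerated := by
    rw [show (⨅ b ∈ Tl, 𝓟 (Set.Ioi b)) = ⨅ s ∈ (Set.Ioi '' Tl), 𝓟 s from (iInf_image).symm]
    exact Filter.isCountablyGenerated_biInf_principal (hlc.image _)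
  have i2 : (⨅ b ∈ Tr, 𝓟 (Set.Iio b)).IsCountablyGenerated := by
    rw [show (⨅ b ∈ Tr, 𝓟 (Set.Iio b)) = ⨅ s ∈ (Set.Iio '' Tr), 𝓟 s from (iInf_image).symm]
    exact Filter.isCountablyGenerated_biInf_principal (hrc.image _)
  exact @Filter.Inf.isCountablyGenerated _ _ _ i1 i2

theorem nhds_one_countably_generated {G : Type u} [Gyrogroup G] [TopologicalSpace G]
    [LinearOrder G] [OrderTopology G]
    (hop : Continuous fun p : G × G => op p.1 p.2)
    (hniso : ¬ IsOpen ({(one : G)} : Set G))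
    (K : Set G) (hKc : IsCompact K) (hKn : K ∈ 𝓝 (one : G)) :
    (𝓝 (one : G)).IsCountablyGenerated := by
  obtain ⟨c, hcne, hct⟩ := exists_ne_tendsto_one hop hniso K hKc hKn
  have hme : ∀ z : G, op z (one : G) = z := op_one
  have hcancel : ∀ z a : G, op z a = z → a = (one : G) := fun z a h =>
    op_left_cancel (h.trans (op_one z).symm)
  have hcases : ({k | c k < (one : G)}.Infinite) ∨ ({k | (one : G) < c k}.Infinite) := by
    by_contra hcon
    rw [not_or, Set.not_infinite, Set.not_infinite] at hcon
    have huniv : (Set.univ : Set ℕ).Finite := by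
      refine Set.Finite.subset (hcon.1.union hcon.2) ?_
      intro k _
      rcases lt_trichotomy (c k) (one : G) with h | h | h
      · exact Or.inl h
      · exact absurd h (hcne k)
      · exact Or.inr h
    exact Set.infinite_univ huniv
  rcases hcases with hA | hB
  · set x : ℕ → G := fun nn => c (Nat.nth (fun k => c k < (one : G)) nn) with hxdef
    have hx : ∀ nn, x nn < (one : G) := fun nn => Nat.nth_mem_of_infinite hA nn
    have hxt : Tendsto x atTop (𝓝 (one : G)) :=
      hct.comp (tendsto_atTop_mono (fun nn => (Nat.nth_strictMono hA).le_apply) tendsto_id)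
    have hR := countable_coinitial_of_seq (fun a b : G => op a b) hop (one : G) hme hcancel
      x hx hxt K hKc hKn
    have hL : ∃ T : Set G, T.Countable ∧ T ⊆ Set.Iio (one : G) ∧
        ∀ y ∈ Set.Iio (one : G), ∃ t ∈ T, y ≤ t := by
      refine ⟨Set.range x, Set.countable_range x, ?_, ?_⟩
      · rintro t ⟨nn, rfl⟩; exact hx nn
      · intro y hy
        obtain ⟨nn, hnn⟩ := (hxt.eventually_mem (Ioi_mem_nhds hy)).exists
        exact ⟨x nn, ⟨nn, rfl⟩, le_of_lt hnn⟩
    exact nhds_isCountablyGenerated_of_cofinal_coinitial (one : G) hL hR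
  · set x : ℕ → G := fun nn => c (Nat.nth (fun k => (one : G) < c k) nn) with hxdef
    have hx : ∀ nn, (one : G) < x nn := fun nn => Nat.nth_mem_of_infinite hB nn
    have hxt : Tendsto x atTop (𝓝 (one : G)) :=
      hct.comp (tendsto_atTop_mono (fun nn => (Nat.nth_strictMono hB).le_apply) tendsto_id)
    have hL := countable_cofinal_of_seq (fun a b : G => op a b) hop (one : G) hme hcancel
      x hx hxt K hKc hKn
    have hR : ∃ T : Set G, T.Countable ∧ T ⊆ Set.Ioi (one : G) ∧
        ∀ y ∈ Set.Ioi (one : G), ∃ t ∈ T, t ≤ y := by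
      refine ⟨Set.range x, Set.countable_range x, ?_, ?_⟩
      · rintro t ⟨nn, rfl⟩; exact hx nn
      · intro y hy
        obtain ⟨nn, hnn⟩ := (hxt.eventually_mem (Iio_mem_nhds hy)).exists
        exact ⟨x nn, ⟨nn, rfl⟩, le_of_lt hnn⟩
    exact nhds_isCountablyGenerated_of_cofinal_coinitial (one : G) hL hR

/-! ### Metrization from an invariant countable neighborhood base -/

theorem metrizable_core {G : Type u} [Gyrogroup G] [TopologicalSpace G] [T0Space G]
    (hop : Continuous fun p : G × G => op p.1 p.2)
    (hinv : Continuous (Gyrogroup.inv : G → G))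
    (𝒰 : Set (Set G)) (h𝒰n : ∀ U ∈ 𝒰, U ∈ 𝓝 (one : G))
    (h𝒰b : ∀ V ∈ 𝓝 (one : G), ∃ U ∈ 𝒰, U ⊆ V)
    (h𝒰g : ∀ U ∈ 𝒰, ∀ x y : G, (gyr x y) '' U = U)
    (hcg : (𝓝 (one : G)).IsCountablyGenerated) :
    TopologicalSpace.MetrizableSpace G := by
  classical
  have hgyrIff : ∀ U ∈ 𝒰, ∀ x y a : G, gyr x y a ∈ U ↔ a ∈ U := by
    intro U hU x y a
    constructor
    · intro ha
      rw [← h𝒰g U hU x y] at ha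
      obtain ⟨u, huU, hu⟩ := ha
      rwa [← (gyr x y).injective hu]
    · intro ha
      rw [← h𝒰g U hU x y]
      exact Set.mem_image_of_mem _ ha
  have hshrink : ∀ N ∈ 𝓝 (one : G), ∃ V, V ∈ 𝓝 (one : G) ∧
      (∀ a ∈ V, ∀ b ∈ V, op a b ∈ N) ∧ (∀ a ∈ V, inv a ∈ V) ∧
      (∀ x y a : G, gyr x y a ∈ V ↔ a ∈ V) := by
    intro N hN
    have h1 : Tendsto (fun p : G × G => op p.1 p.2) (𝓝 ((one : G), (one : G))) (𝓝 (one : G)) := by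
      have := hop.tendsto ((one : G), (one : G))
      rwa [one_op] at this
    obtain ⟨w1, hw1, w2, hw2, hw⟩ := mem_nhds_prod_iff.1 (mem_map.1 (h1 hN))
    obtain ⟨U', hU'𝒰, hU'sub⟩ := h𝒰b (w1 ∩ w2) (inter_mem hw1 hw2)
    refine ⟨U' ∩ (Gyrogroup.inv ⁻¹' U'), ?_, ?_, ?_, ?_⟩
    · refine inter_mem (h𝒰n U' hU'𝒰) ?_
      refine hinv.continuousAt.preimage_mem_nhds ?_
      rw [inv_one']
      exact h𝒰n U' hU'𝒰
    · intro a ha b hb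
      exact hw (Set.mk_mem_prod (hU'sub ha.1).1 (hU'sub hb.1).2)
    · rintro a ⟨h1', h2'⟩
      refine ⟨h2', ?_⟩
      rw [Set.mem_preimage, inv_invol]
      exact h1'
    · intro x y a
      simp only [Set.mem_inter_iff, Set.mem_preimage]
      rw [← gyr_inv, hgyrIff U' hU'𝒰 x y a, hgyrIff U' hU'𝒰 x y (inv a)]
  let g : Set G → Set G := fun N => if h : N ∈ 𝓝 (one : G) then (hshrink N h).choose else Set.univ
  have hg : ∀ N, ∀ h : N ∈ 𝓝 (one : G), (g N ∈ 𝓝 (one : G)) ∧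
      (∀ a ∈ g N, ∀ b ∈ g N, op a b ∈ N) ∧ (∀ a ∈ g N, inv a ∈ g N) ∧
      (∀ x y a : G, gyr x y a ∈ g N ↔ a ∈ g N) := by
    intro N h
    simp only [g, dif_pos h]
    exact (hshrink N h).choose_spec
  haveI := hcg
  obtain ⟨B, hB⟩ := (𝓝 (one : G)).exists_antitone_basis
  have hBmem : ∀ n, B n ∈ 𝓝 (one : G) := fun n => hB.toHasBasis.mem_of_mem trivial
  let V : ℕ → Set G := fun n => Nat.rec (g (B 0)) (fun n Vn => g (Vn ∩ B (n+1))) n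
  have hVn : ∀ n, V n ∈ 𝓝 (one : G) := by
    intro n
    induction n with
    | zero => exact (hg (B 0) (hBmem 0)).1
    | succ n ih => exact (hg _ (inter_mem ih (hBmem (n+1)))).1
  have hVinv : ∀ n, ∀ a ∈ V n, inv a ∈ V n := by
    intro n
    cases n with
    | zero => exact (hg (B 0) (hBmem 0)).2.2.1
    | succ m => exact (hg _ (inter_mem (hVn m) (hBmem (m+1)))).2.2.1
  have hVgyr : ∀ n, ∀ x y a : G, gyr x y a ∈ V n ↔ a ∈ V n := by
    intro n
    cases n with
    | zero => exact (hg (B 0) (hBmem 0)).2.2.2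
    | succ m => exact (hg _ (inter_mem (hVn m) (hBmem (m+1)))).2.2.2
  have hVmul : ∀ n, ∀ a ∈ V (n+1), ∀ b ∈ V (n+1), op a b ∈ V n ∩ B (n+1) :=
    fun n => (hg _ (inter_mem (hVn n) (hBmem (n+1)))).2.1
  have hV0mul : ∀ a ∈ V 0, ∀ b ∈ V 0, op a b ∈ B 0 := (hg _ (hBmem 0)).2.1
  have hone : ∀ n, (one : G) ∈ V n := fun n => mem_of_mem_nhds (hVn n)
  have hVB : ∀ n, V n ⊆ B n := by
    intro n
    cases n with
    | zero =>
      intro a ha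
      have h5 := hV0mul a ha (one : G) (hone 0)
      rwa [op_one] at h5
    | succ m =>
      intro a ha
      have h5 := hVmul m a ha (one : G) (hone (m+1))
      rw [op_one] at h5
      exact h5.2
  have hVnest : ∀ n, V (n+1) ⊆ V n := by
    intro n a ha
    have h5 := hVmul n a ha (one : G) (hone (n+1))
    rw [op_one] at h5
    exact h5.1
  have hVanti : Antitone V := antitone_nat_of_succ_le hVnest
  let E : ℕ → Set (G × G) := fun n => {q : G × G | op (inv q.1) q.2 ∈ V n}
  let 𝓕 : Filter (G × G) := ⨅ n, 𝓟 (E n)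
  have hEmem : ∀ n, E n ∈ 𝓕 := fun n => mem_iInf_of_mem n (mem_principal_self _)
  have hsymm : Tendsto Prod.swap 𝓕 𝓕 := by
    rw [tendsto_iInf]
    intro n
    rw [tendsto_principal]
    filter_upwards [hEmem n] with qq hq
    show op (inv qq.2) qq.1 ∈ V n
    have h1 : inv (op (inv qq.1) qq.2) ∈ V n := hVinv n _ hq
    rw [inv_op_rev, inv_invol] at h1
    exact (hVgyr n _ _ _).1 h1
  have hcomp : (𝓕.lift' fun s => SetRel.comp s s) ≤ 𝓕 := by
    refine le_iInf fun n => ?_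
    refine le_principal_iff.2 (mem_of_superset (Filter.mem_lift' (hEmem (n+1))) ?_)
    rintro ⟨a, c⟩ ⟨b, hab, hbc⟩
    show op (inv a) c ∈ V n
    rw [op_decomp a b c]
    exact (hVmul n _ hab _ ((hVgyr (n+1) _ _ _).2 hbc)).1
  have hnhds : ∀ a : G, 𝓝 a = Filter.comap (Prod.mk a) 𝓕 := by
    intro a
    have hdir : Directed (· ≥ ·) fun n => 𝓟 (V n) := fun m n =>
      ⟨max m n, Filter.principal_mono.2 (hVanti (le_max_left m n)),
        Filter.principal_mono.2 (hVanti (le_max_right m n))⟩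
    have h1 : 𝓝 (one : G) = ⨅ n, 𝓟 (V n) := by
      apply le_antisymm
      · exact le_iInf fun n => le_principal_iff.2 (hVn n)
      · refine Filter.le_def.2 fun N hN => ?_
        obtain ⟨n, -, hn⟩ := hB.toHasBasis.mem_iff.1 hN
        exact mem_iInf_of_mem n (Filter.mem_principal.2 ((hVB n).trans hn))
    have h2 : ∀ n, (fun b => op a b) '' V n = Prod.mk a ⁻¹' E n := by
      intro n
      ext b
      constructor
      · rintro ⟨v, hv, rfl⟩
        show op (inv a) (op a v) ∈ V n
        rwa [inv_op_cancel]
      · intro hb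
        exact ⟨op (inv a) b, hb, op_inv_cancel a b⟩
    calc 𝓝 a = Filter.map (fun b => op a b) (𝓝 (one : G)) := nhds_translate hop a
      _ = ⨅ n, 𝓟 ((fun b => op a b) '' V n) := by
          rw [h1, Filter.map_iInf_eq hdir]
          simp only [Filter.map_principal]
      _ = ⨅ n, 𝓟 (Prod.mk a ⁻¹' E n) := by
          refine iInf_congr fun n => ?_
          rw [h2 n]
      _ = Filter.comap (Prod.mk a) 𝓕 := by
          rw [Filter.comap_iInf]
          simp only [Filter.comap_principal]
  letI U : UniformSpace G :=
    { toTopologicalSpace := ‹TopologicalSpace G›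
      uniformity := 𝓕
      symm := hsymm
      comp := hcomp
      nhds_eq_comap_uniformity := hnhds }
  haveI : (uniformity G).IsCountablyGenerated := by
    show (⨅ n, 𝓟 (E n)).IsCountablyGenerated
    exact Filter.isCountablyGenerated_seq E
  exact UniformSpace.metrizableSpace

end STG


open Gyrogroup
/-- Every locally compact strongly topologically orderable gyrogroup is metrizable. -/
theorem stmt17 {G : Type u} [Gyrogroup G] [TopologicalSpace G]
    [LocallyCompactSpace G] (h : StronglyTopologicallyOrderable G) :
    TopologicalSpace.MetrizableSpace G := by
  obtain ⟨⟨⟨hop, hinv⟩, 𝒰, h𝒰n, h𝒰b, h𝒰g⟩, l, hl⟩ := h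
  letI : LinearOrder G := l
  haveI : OrderTopology G := ⟨hl⟩
  by_cases hiso : IsOpen ({(one : G)} : Set G)
  · have hs : ∀ a : G, IsOpen ({a} : Set G) := by
      intro a
      have h2 := (STG.homeoL hop a).isOpen_image.2 hiso
      have h3 : (STG.homeoL hop a) (one : G) = a := op_one a
      rwa [Set.image_singleton, h3] at h2
    haveI : DiscreteTopology G := discreteTopology_iff_isOpen_singleton.2 hs
    infer_instance
  · obtain ⟨K, hKc, hKn⟩ := exists_compact_mem_nhds (one : G)
    have hcg := STG.nhds_one_countably_generated hop hiso K hKc hKn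
    exact STG.metrizable_core hop hinv 𝒰 h𝒰n h𝒰b h𝒰g hcg
end

section
/- Let G be a strongly topologically orderable gyrogroup and D a discrete subset of G. Then the points of D can be separated by pairwise disjoint open neighborhoods: there exists a family {U_x : x ∈ D} of open sets with x ∈ U_x and U_x ∩ U_y = ∅ for distinct x, y ∈ D. -/
open Set Topology

universe u

open Gyrogroup

/-! Only the order topology matters. Around each `x ∈ D` take a convex neighbourhood `V x` meeting
`D` only in `x`. Convexity forces `V x ∩ V y ⊆ (x, y)` for `x < y` in `D`, and `V x ∩ V w = ∅` as
soon as a point of `D` lies between `x` and `w`; so `V x` overlaps at most one `V y` on each side.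
Choosing a point in each such overlap and cutting `V x` there on both sides gives pairwise disjoint
open neighbourhoods. -/

section ConvexIsolating

variable {α : Type*} [LinearOrder α] {D : Set α} {V : α → Set α}

theorem inter_subset_Ioo_of_isolating (hV : ∀ x ∈ D, (V x).OrdConnected)
    (hVD : ∀ x ∈ D, ∀ y ∈ D, y ∈ V x ↔ y = x) {x y : α} (hx : x ∈ D) (hy : y ∈ D)
    (hxy : x < y) : V x ∩ V y ⊆ Ioo x y := by
  rintro z ⟨hzx, hzy⟩
  constructor
  · by_contra! hzx'
    have hxy' : x ∈ V y := (hV y hy).out hzy ((hVD y hy y hy).2 rfl) ⟨hzx', hxy.le⟩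
    exact hxy.ne ((hVD y hy x hx).1 hxy')
  · by_contra! hyz
    have hyx : y ∈ V x := (hV x hx).out ((hVD x hx x hx).2 rfl) hzx ⟨hxy.le, hyz⟩
    exact hxy.ne' ((hVD x hx y hy).1 hyx)

theorem disjoint_of_isolating_of_lt_of_lt (hV : ∀ x ∈ D, (V x).OrdConnected)
    (hVD : ∀ x ∈ D, ∀ y ∈ D, y ∈ V x ↔ y = x) {x y w : α} (hx : x ∈ D) (hy : y ∈ D)
    (hw : w ∈ D) (hxy : x < y) (hyw : y < w) : V x ∩ V w = ∅ := by
  refine Set.eq_empty_of_forall_notMem fun z ⟨hzx, hzw⟩ => ?_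
  rcases le_or_gt y z with hyz | hzy
  · have hyx : y ∈ V x := (hV x hx).out ((hVD x hx x hx).2 rfl) hzx ⟨hxy.le, hyz⟩
    exact hxy.ne' ((hVD x hx y hy).1 hyx)
  · have hyw' : y ∈ V w := (hV w hw).out hzw ((hVD w hw w hw).2 rfl) ⟨hzy.le, hyw.le⟩
    exact hyw.ne ((hVD w hw y hy).1 hyw')

theorem subsingleton_upper_overlaps_of_isolating (hV : ∀ x ∈ D, (V x).OrdConnected)
    (hVD : ∀ x ∈ D, ∀ y ∈ D, y ∈ V x ↔ y = x) {x : α} (hx : x ∈ D) :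
    {y ∈ D | x < y ∧ (V x ∩ V y).Nonempty}.Subsingleton := by
  rintro y ⟨hy, hxy, hne⟩ w ⟨hw, hxw, hne'⟩
  by_contra! hyw
  rcases hyw.lt_or_gt with hyw | hwy
  · exact hne'.ne_empty (disjoint_of_isolating_of_lt_of_lt hV hVD hx hy hw hxy hyw)
  · exact hne.ne_empty (disjoint_of_isolating_of_lt_of_lt hV hVD hx hw hy hxw hwy)

theorem subsingleton_lower_overlaps_of_isolating (hV : ∀ x ∈ D, (V x).OrdConnected)
    (hVD : ∀ x ∈ D, ∀ y ∈ D, y ∈ V x ↔ y = x) {x : α} (hx : x ∈ D) :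
    {y ∈ D | y < x ∧ (V y ∩ V x).Nonempty}.Subsingleton := by
  rintro y ⟨hy, hyx, hne⟩ w ⟨hw, hwx, hne'⟩
  by_contra! hyw
  rcases hyw.lt_or_gt with hyw | hwy
  · exact hne.ne_empty (disjoint_of_isolating_of_lt_of_lt hV hVD hy hw hx hyw hwx)
  · exact hne'.ne_empty (disjoint_of_isolating_of_lt_of_lt hV hVD hw hy hx hwy hyx)

variable [TopologicalSpace α] [OrderTopology α]

theorem exists_open_pairwiseDisjoint_of_isolating (hV : ∀ x ∈ D, (V x).OrdConnected)
    (hVD : ∀ x ∈ D, ∀ y ∈ D, y ∈ V x ↔ y = x) (hVnhds : ∀ x ∈ D, V x ∈ 𝓝 x) :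
    ∃ U : α → Set α, (∀ x ∈ D, IsOpen (U x) ∧ x ∈ U x) ∧ D.PairwiseDisjoint U := by
  classical
  let c : α → α → α := fun x y => if h : (V x ∩ V y).Nonempty then h.some else x
  have hc : ∀ x y, (V x ∩ V y).Nonempty → c x y ∈ V x ∩ V y := fun x y h => by
    simp only [c, dif_pos h]; exact h.some_mem
  let U : α → Set α := fun x => interior (V x) ∩
    (⋂ y ∈ {y ∈ D | x < y ∧ (V x ∩ V y).Nonempty}, Iio (c x y)) ∩
    (⋂ y ∈ {y ∈ D | y < x ∧ (V y ∩ V x).Nonempty}, Ioi (c y x))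
  refine ⟨U, fun x hx => ⟨?_, ?_⟩, ?_⟩
  · exact (isOpen_interior.inter
      ((subsingleton_upper_overlaps_of_isolating hV hVD hx).finite.isOpen_biInter
        fun _ _ => isOpen_Iio)).inter
      ((subsingleton_lower_overlaps_of_isolating hV hVD hx).finite.isOpen_biInter
        fun _ _ => isOpen_Ioi)
  · refine ⟨⟨mem_interior_iff_mem_nhds.2 (hVnhds x hx), ?_⟩, ?_⟩
    · simp only [mem_iInter₂]
      rintro y ⟨hy, hxy, hne⟩
      exact (inter_subset_Ioo_of_isolating hV hVD hx hy hxy (hc x y hne)).1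
    · simp only [mem_iInter₂]
      rintro y ⟨hy, hyx, hne⟩
      exact (inter_subset_Ioo_of_isolating hV hVD hy hx hyx (hc y x hne)).2
  · have key : ∀ x ∈ D, ∀ y ∈ D, x < y → Disjoint (U x) (U y) := by
      refine fun x hx y hy hxy => Set.disjoint_left.2 fun z hzx hzy => ?_
      have hne : (V x ∩ V y).Nonempty := ⟨z, interior_subset hzx.1.1, interior_subset hzy.1.1⟩
      have hzc : z < c x y := mem_iInter₂.1 hzx.1.2 y ⟨hy, hxy, hne⟩
      have hcz : c x y < z := mem_iInter₂.1 hzy.2 x ⟨hx, hxy, hne⟩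
      exact hzc.not_gt hcz
    intro x hx y hy hxy
    rcases hxy.lt_or_gt with hlt | hgt
    · exact key x hx y hy hlt
    · exact (key y hy x hx hgt).symm

theorem exists_open_pairwiseDisjoint_of_discrete (hD : ∀ x ∈ D, ∃ W ∈ 𝓝 x, W ∩ D = {x}) :
    ∃ U : α → Set α, (∀ x ∈ D, IsOpen (U x) ∧ x ∈ U x) ∧ D.PairwiseDisjoint U := by
  choose! W hW hWD using hD
  refine exists_open_pairwiseDisjoint_of_isolating (V := fun x => ordConnectedComponent (W x) x)
    (fun x _ => inferInstance) (fun x hx y hy => ⟨fun hyx => ?_, ?_⟩)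
    fun x hx => ordConnectedComponent_mem_nhds.2 (hW x hx)
  · exact (hWD x hx ▸ (⟨ordConnectedComponent_subset hyx, hy⟩ : y ∈ W x ∩ D) : y ∈ ({x} : Set α))
  · rintro rfl
    exact self_mem_ordConnectedComponent.2 (mem_of_mem_nhds (hW y hy))

end ConvexIsolating

/-- In a strongly topologically orderable gyrogroup the points of a discrete subset can
be separated by pairwise disjoint open neighborhoods. -/
theorem stmt18 {G : Type u} [Gyrogroup G] [TopologicalSpace G]
    (h : StronglyTopologicallyOrderable G) (D : Set G)
    (hD : ∀ x ∈ D, ∃ U ∈ nhds x, U ∩ D = {x}) :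
    ∃ U : G → Set G, (∀ x ∈ D, IsOpen (U x) ∧ x ∈ U x) ∧
      ∀ x ∈ D, ∀ y ∈ D, x ≠ y → Disjoint (U x) (U y) := by
  obtain ⟨-, l, hl⟩ := h
  let _ : LinearOrder G := l
  have : OrderTopology G := ⟨hl⟩
  exact exists_open_pairwiseDisjoint_of_discrete hD
end
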